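/- arXiv:2605.28685 — 7 statements merged into one kernel-verified Lean document; each statement's English description precedes it below -/
import Mathlib

section
/- Fuchs–van de Graaf inequality: for any two density matrices ρ and γ on a finite nonempty index type ι, one has (1/2)·‖ρ − γ‖₁ ≤ √(1 − F(ρ, γ)); equivalently, F(ρ, γ) ≤ 1 − (1/4)·‖ρ − γ‖₁². -/
open Matrix
open scoped ComplexOrder

/-- Square root of a matrix: the unique positive semidefinite square root when the
matrix is positive semidefinite, and (junk value) `0` otherwise. -/
noncomputable def msqrt {ι : Type*} [Fintype ι] [DecidableEq ι] (M : Matrix ι ι ℂ) :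
    Matrix ι ι ℂ :=
  open scoped Classical in
  if h : M.PosSemidef then
    (h.1.eigenvectorUnitary : Matrix ι ι ℂ) *
      diagonal ((↑) ∘ (Real.sqrt ·) ∘ h.1.eigenvalues) *
      (star h.1.eigenvectorUnitary : Matrix ι ι ℂ)
  else 0

/-- Trace norm `‖A‖₁ = trace √(Aᴴ A)`. -/
noncomputable def traceNorm {ι : Type*} [Fintype ι] [DecidableEq ι] (A : Matrix ι ι ℂ) : ℝ :=
  ((msqrt (Aᴴ * A)).trace).re

/-- Squared Uhlmann fidelity `F(ρ, γ) = (trace √(√ρ · γ · √ρ))²`. -/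
noncomputable def fidelity {ι : Type*} [Fintype ι] [DecidableEq ι] (ρ γ : Matrix ι ι ℂ) : ℝ :=
  (((msqrt (msqrt ρ * γ * msqrt ρ)).trace).re) ^ 2

set_option linter.unusedSectionVars false

section Aux
variable {ι : Type*} [Fintype ι] [DecidableEq ι]

lemma msqrt_eq {M : Matrix ι ι ℂ} (h : M.PosSemidef) : msqrt M =
    (h.1.eigenvectorUnitary : Matrix ι ι ℂ) *
      diagonal ((↑) ∘ (Real.sqrt ·) ∘ h.1.eigenvalues) *
      (star h.1.eigenvectorUnitary : Matrix ι ι ℂ) := dif_pos h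

open scoped MatrixOrder in
lemma msqrt_eq_sqrt {M : Matrix ι ι ℂ} (h : M.PosSemidef) : msqrt M = CFC.sqrt M := by
  rw [CFC.sqrt_eq_real_sqrt M (nonneg_iff_posSemidef.mpr h), cfcₙ_eq_cfc, h.1.cfc_eq,
    msqrt_eq h]; rfl

open scoped MatrixOrder in
lemma msqrt_posSemidef {M : Matrix ι ι ℂ} (h : M.PosSemidef) : (msqrt M).PosSemidef := by
  rw [msqrt_eq_sqrt h]; exact nonneg_iff_posSemidef.mp (CFC.sqrt_nonneg _)

open scoped MatrixOrder in
lemma msqrt_mul_self {M : Matrix ι ι ℂ} (h : M.PosSemidef) : msqrt M * msqrt M = M := by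
  rw [msqrt_eq_sqrt h]; exact CFC.sqrt_mul_sqrt_self M (nonneg_iff_posSemidef.mpr h)

/-- vectorization into Euclidean space -/
noncomputable def mvec (X : Matrix ι ι ℂ) : EuclideanSpace ℂ (ι × ι) :=
  WithLp.toLp 2 (fun p : ι × ι => X p.1 p.2)

lemma inner_mvec (X Y : Matrix ι ι ℂ) : (inner ℂ (mvec X) (mvec Y) : ℂ) = (Xᴴ * Y).trace := by
  simp only [PiLp.inner_apply, RCLike.inner_apply', mvec, PiLp.toLp_apply, Matrix.trace, Matrix.diag,
    Matrix.mul_apply, conjTranspose_apply, starRingEnd_apply]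
  rw [Fintype.sum_prod_type]
  exact Finset.sum_comm

lemma norm_mvec (X : Matrix ι ι ℂ) : ‖mvec X‖ = Real.sqrt ((Xᴴ * X).trace.re) := by
  rw [@norm_eq_sqrt_re_inner ℂ, ← inner_mvec]
  norm_num [RCLike.re_to_complex]

lemma cs_trace (X Y : Matrix ι ι ℂ) :
    ‖(Xᴴ * Y).trace‖ ≤ Real.sqrt ((Xᴴ * X).trace.re) * Real.sqrt ((Yᴴ * Y).trace.re) := by
  rw [← inner_mvec, ← norm_mvec, ← norm_mvec]
  exact norm_inner_le_norm _ _

lemma psd_trace_real {P : Matrix ι ι ℂ} (h : P.PosSemidef) : P.trace = (P.trace.re : ℂ) := by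
  have h1 : star P.trace = P.trace := by
    conv_lhs => rw [← Matrix.trace_conjTranspose, h.isHermitian.eq]
  exact (Complex.conj_eq_iff_re.mp h1).symm

lemma psd_trace_nonneg {P : Matrix ι ι ℂ} (h : P.PosSemidef) : 0 ≤ P.trace.re := by
  have h1 : P = (msqrt P)ᴴ * msqrt P := by
    rw [(msqrt_posSemidef h).isHermitian.eq, msqrt_mul_self h]
  rw [h1, ← inner_mvec]
  have := @inner_self_nonneg ℂ _ _ _ _ (mvec (msqrt P))
  simpa [RCLike.re_to_complex] using this

lemma polar_decomp (M : Matrix ι ι ℂ) :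
    ∃ U : Matrix ι ι ℂ, Uᴴ * U = 1 ∧ U * Uᴴ = 1 ∧ M = U * msqrt (Mᴴ * M) := by
  have hH : (Mᴴ * M).PosSemidef := posSemidef_conjTranspose_mul_self M
  have hHer := hH.isHermitian
  set d : ι → ℝ := hHer.eigenvalues with hd_def
  have hd : ∀ i, 0 ≤ d i := fun i => hH.eigenvalues_nonneg i
  set V : Matrix ι ι ℂ := (hHer.eigenvectorUnitary : Matrix ι ι ℂ) with hV_def
  have hVmem : V ∈ Matrix.unitaryGroup ι ℂ := hHer.eigenvectorUnitary.2
  have hV1 : V * Vᴴ = 1 := by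
    have := (Matrix.mem_unitaryGroup_iff).mp hVmem
    simpa [Matrix.star_eq_conjTranspose] using this
  have hV2 : Vᴴ * V = 1 := mul_eq_one_comm.mp hV1
  set D : Matrix ι ι ℂ := Matrix.diagonal (fun i => ((Real.sqrt (d i) : ℝ) : ℂ)) with hD_def
  have hsqrt : msqrt (Mᴴ * M) = V * D * Vᴴ := by
    rw [msqrt_eq hH]
    rfl
  set N : Matrix ι ι ℂ := M * V with hN_def
  have hNN : Nᴴ * N = Matrix.diagonal (fun i => ((d i : ℝ) : ℂ)) := by
    have := hHer.conjStarAlgAut_star_eigenvectorUnitary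
    simp only [Unitary.conjStarAlgAut_apply, Unitary.coe_star, star_star] at this
    calc Nᴴ * N = Vᴴ * (Mᴴ * M) * V := by
          rw [hN_def, conjTranspose_mul]; noncomm_ring
      _ = Matrix.diagonal (fun i => ((d i : ℝ) : ℂ)) := by
          rw [← Matrix.star_eq_conjTranspose]; exact this
  have hent : ∀ i j, (∑ k, (starRingEnd ℂ) (N k i) * N k j)
      = if i = j then ((d i : ℝ) : ℂ) else 0 := by
    intro i j
    have h0 := congrFun (congrFun hNN i) j
    rw [Matrix.diagonal_apply] at h0
    rw [← h0, Matrix.mul_apply]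
    refine Finset.sum_congr rfl fun k _ => ?_
    rw [conjTranspose_apply, starRingEnd_apply]
  have hcol0 : ∀ i, d i = 0 → ∀ k, N k i = 0 := by
    intro i hdi k
    have h2 := hent i i
    rw [if_pos rfl, hdi, Complex.ofReal_zero] at h2
    have h3 : ((∑ k, Complex.normSq (N k i) : ℝ) : ℂ) = 0 := by
      push_cast
      rw [← h2]
      refine Finset.sum_congr rfl fun m _ => ?_
      rw [mul_comm, Complex.mul_conj]
    have h4 : ∑ k, Complex.normSq (N k i) = 0 := by exact_mod_cast h3
    have h5 := (Finset.sum_eq_zero_iff_of_nonneg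
      (fun m _ => Complex.normSq_nonneg (N m i))).mp h4 k (Finset.mem_univ k)
    exact Complex.normSq_eq_zero.mp h5
  set u : ι → EuclideanSpace ℂ ι :=
    fun i => WithLp.toLp 2 (fun k => ((Real.sqrt (d i) : ℂ))⁻¹ * N k i : ι → ℂ) with hu_def
  have horth : Orthonormal ℂ (Set.restrict {i | d i ≠ 0} u) := by
    rw [orthonormal_iff_ite]
    rintro ⟨i, hi⟩ ⟨j, hj⟩
    show inner ℂ (u i) (u j) = _
    have hconj : ∀ r : ℝ, (starRingEnd ℂ) ((r:ℂ))⁻¹ = ((r:ℂ))⁻¹ := by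
      intro r; rw [map_inv₀, Complex.conj_ofReal]
    have hthis : (inner ℂ (u i) (u j) : ℂ)
        = (starRingEnd ℂ) ((Real.sqrt (d i) : ℂ))⁻¹ * ((Real.sqrt (d j) : ℂ))⁻¹
          * ∑ k, (starRingEnd ℂ) (N k i) * N k j := by
      simp only [PiLp.inner_apply, RCLike.inner_apply, hu_def, PiLp.toLp_apply]
      rw [Finset.mul_sum]
      congr 1; funext k
      rw [_root_.map_mul]
      ring
    rw [hthis, hent i j]
    by_cases hij : i = j
    · subst hij
      simp only [if_pos rfl, if_true]
      have hdi0 : (0:ℝ) < d i := lt_of_le_of_ne (hd i) (Ne.symm hi)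
      have hs : Real.sqrt (d i) ≠ 0 := (Real.sqrt_pos.mpr hdi0).ne'
      rw [hconj]
      have hcast : ((Real.sqrt (d i):ℂ))⁻¹ * ((Real.sqrt (d i):ℂ))⁻¹ * ((d i : ℝ):ℂ)
          = ((((Real.sqrt (d i))⁻¹ * (Real.sqrt (d i))⁻¹ * d i : ℝ)):ℂ) := by
        push_cast; ring
      rw [hcast, Complex.ofReal_eq_one]
      field_simp
      rw [Real.sq_sqrt (hd i)]
    · rw [if_neg hij, if_neg (by simpa [Subtype.ext_iff] using hij), mul_zero]
  obtain ⟨b, hb⟩ := horth.exists_orthonormalBasis_extension_of_card_eq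
    (by simp [finrank_euclideanSpace])
  set W : Matrix ι ι ℂ := Matrix.of (fun k i => b i k) with hW_def
  have hW1 : Wᴴ * W = 1 := by
    ext i j
    have hbij := orthonormal_iff_ite.mp b.orthonormal i j
    simp only [PiLp.inner_apply, RCLike.inner_apply'] at hbij
    simp only [Matrix.mul_apply, conjTranspose_apply, hW_def, Matrix.of_apply,
      Matrix.one_apply, starRingEnd_apply] at hbij ⊢
    rw [hbij]
  have hW2 : W * Wᴴ = 1 := mul_eq_one_comm.mp hW1
  have hWD : W * D = N := by
    ext k i
    rw [hD_def, Matrix.mul_diagonal]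
    by_cases hdi : d i = 0
    · simp [hcol0 i hdi k, hdi]
    · have hbi : b i = u i := hb i hdi
      have : W k i = ((Real.sqrt (d i) : ℂ))⁻¹ * N k i := by
        rw [hW_def]
        show (b i) k = _
        rw [hbi]
      rw [this]
      have hs : ((Real.sqrt (d i) : ℂ)) ≠ 0 := by
        simp only [ne_eq, Complex.ofReal_eq_zero]
        exact Real.sqrt_ne_zero'.mpr (lt_of_le_of_ne (hd i) (Ne.symm hdi))
      field_simp
  refine ⟨W * Vᴴ, ?_, ?_, ?_⟩
  · rw [conjTranspose_mul, conjTranspose_conjTranspose]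
    calc V * Wᴴ * (W * Vᴴ) = V * (Wᴴ * W) * Vᴴ := by noncomm_ring
      _ = 1 := by rw [hW1, mul_one]; exact hV1
  · calc W * Vᴴ * (W * Vᴴ)ᴴ = W * (Vᴴ * V) * Wᴴ := by
          rw [conjTranspose_mul, conjTranspose_conjTranspose]; noncomm_ring
      _ = 1 := by rw [hV2, mul_one]; exact hW2
  · rw [hsqrt]
    calc M = M * (V * Vᴴ) := by rw [hV1, mul_one]
      _ = N * Vᴴ := by rw [hN_def]; noncomm_ring
      _ = W * D * Vᴴ := by rw [hWD]
      _ = W * Vᴴ * (V * D * Vᴴ) := by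
          calc W * D * Vᴴ = W * (Vᴴ * V) * D * Vᴴ := by rw [hV2, mul_one]
            _ = W * Vᴴ * (V * D * Vᴴ) := by noncomm_ring

lemma traceNorm_nonneg_aux (M : Matrix ι ι ℂ) : 0 ≤ traceNorm M :=
  psd_trace_nonneg (msqrt_posSemidef (posSemidef_conjTranspose_mul_self M))

lemma re_trace_mul_le (M V : Matrix ι ι ℂ) (hV : Vᴴ * V = 1) :
    ((V * M).trace).re ≤ traceNorm M := by
  obtain ⟨U, hU1, hU2, hM⟩ := polar_decomp M
  set P := msqrt (Mᴴ * M) with hPdef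
  have hPpsd : P.PosSemidef := msqrt_posSemidef (posSemidef_conjTranspose_mul_self M)
  set Q := msqrt P with hQdef
  have hQpsd : Q.PosSemidef := msqrt_posSemidef hPpsd
  have hQQ : Q * Q = P := msqrt_mul_self hPpsd
  have hQH : Qᴴ = Q := hQpsd.isHermitian.eq
  have key : (V * M).trace = (Qᴴ * (V * U * Q)).trace := by
    rw [hM, hQH]
    calc (V * (U * P)).trace = ((V * U * Q) * Q).trace := by
          congr 1; rw [← hQQ]; noncomm_ring
      _ = (Q * (V * U * Q)).trace := trace_mul_comm _ _
  have h1 : Qᴴ * Q = P := by rw [hQH]; exact hQQ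
  have h2 : (V * U * Q)ᴴ * (V * U * Q) = P := by
    calc (V * U * Q)ᴴ * (V * U * Q)
        = Qᴴ * (Uᴴ * ((Vᴴ * V) * (U * Q))) := by
          simp only [conjTranspose_mul]; noncomm_ring
      _ = Qᴴ * ((Uᴴ * U) * Q) := by rw [hV, one_mul]; noncomm_ring
      _ = P := by rw [hU1, one_mul, hQH, hQQ]
  have h4 := cs_trace Q (V * U * Q)
  rw [h1, h2] at h4
  have h5 : Real.sqrt (P.trace.re) * Real.sqrt (P.trace.re) = P.trace.re :=
    Real.mul_self_sqrt (psd_trace_nonneg hPpsd)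
  rw [key]
  calc ((Qᴴ * (V * U * Q)).trace).re ≤ ‖(Qᴴ * (V * U * Q)).trace‖ := Complex.re_le_norm _
    _ ≤ Real.sqrt (P.trace.re) * Real.sqrt (P.trace.re) := h4
    _ = traceNorm M := h5

lemma traceNorm_mul_conjTranspose_le_aux (X Y : Matrix ι ι ℂ) :
    traceNorm (X * Yᴴ) ≤ Real.sqrt ((Xᴴ * X).trace.re) * Real.sqrt ((Yᴴ * Y).trace.re) := by
  obtain ⟨U, hU1, hU2, hM⟩ := polar_decomp (X * Yᴴ)
  set P := msqrt ((X * Yᴴ)ᴴ * (X * Yᴴ)) with hPdef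
  have hPpsd : P.PosSemidef := msqrt_posSemidef (posSemidef_conjTranspose_mul_self (X * Yᴴ))
  have hP : P = (Uᴴ * X) * Yᴴ := by
    calc P = (Uᴴ * U) * P := by rw [hU1, one_mul]
      _ = Uᴴ * (U * P) := mul_assoc _ _ _
      _ = Uᴴ * (X * Yᴴ) := by rw [hM]
      _ = (Uᴴ * X) * Yᴴ := (mul_assoc _ _ _).symm
  have hPtr : P.trace = (Yᴴ * (Uᴴ * X)).trace := by
    rw [hP]; exact trace_mul_comm _ _
  have h2 : (Uᴴ * X)ᴴ * (Uᴴ * X) = Xᴴ * X := by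
    rw [conjTranspose_mul, conjTranspose_conjTranspose]
    calc Xᴴ * U * (Uᴴ * X) = Xᴴ * (U * Uᴴ) * X := by noncomm_ring
      _ = Xᴴ * X := by rw [hU2, mul_one]
  have h4 := cs_trace Y (Uᴴ * X)
  rw [h2] at h4
  have : traceNorm (X * Yᴴ) = P.trace.re := rfl
  rw [this, hPtr]
  calc ((Yᴴ * (Uᴴ * X)).trace).re ≤ ‖(Yᴴ * (Uᴴ * X)).trace‖ := Complex.re_le_norm _
    _ ≤ Real.sqrt ((Yᴴ * Y).trace.re) * Real.sqrt ((Xᴴ * X).trace.re) := h4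
    _ = Real.sqrt ((Xᴴ * X).trace.re) * Real.sqrt ((Yᴴ * Y).trace.re) := mul_comm _ _

open scoped MatrixOrder in
lemma trace_msqrt_mul_conjTranspose (M : Matrix ι ι ℂ) :
    (msqrt (M * Mᴴ)).trace = (msqrt (Mᴴ * M)).trace := by
  obtain ⟨U, hU1, hU2, hM⟩ := polar_decomp M
  set P := msqrt (Mᴴ * M) with hPdef
  have hPpsd : P.PosSemidef := msqrt_posSemidef (posSemidef_conjTranspose_mul_self M)
  have hPH : Pᴴ = P := hPpsd.isHermitian.eq
  have hMMH : (M * Mᴴ).PosSemidef := posSemidef_self_mul_conjTranspose M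
  have hRpsd : (U * P * Uᴴ).PosSemidef := hPpsd.mul_mul_conjTranspose_same U
  have hsq : (U * P * Uᴴ) ^ 2 = M * Mᴴ := by
    rw [pow_two, hM]
    calc (U * P * Uᴴ) * (U * P * Uᴴ) = U * P * (Uᴴ * U) * P * Uᴴ := by noncomm_ring
      _ = U * P * (U * P)ᴴ := by rw [hU1]; rw [conjTranspose_mul, hPH]; noncomm_ring
  have heq : U * P * Uᴴ = msqrt (M * Mᴴ) := by
    rw [msqrt_eq_sqrt hMMH]
    exact (CFC.sqrt_unique (by rw [← pow_two]; exact hsq)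
      (Matrix.nonneg_iff_posSemidef.mpr hRpsd)).symm
  rw [← heq, trace_mul_cycle, hU1, one_mul]

end Aux

/-- **Fuchs–van de Graaf inequality**: for density matrices `ρ, γ`,
`(1/2)·‖ρ − γ‖₁ ≤ √(1 − F(ρ, γ))`; equivalently `F(ρ, γ) ≤ 1 − (1/4)·‖ρ − γ‖₁²`. -/
theorem fuchs_van_de_graaf {ι : Type*} [Fintype ι] [DecidableEq ι] [Nonempty ι]
    (ρ γ : Matrix ι ι ℂ) (hρ : ρ.PosSemidef) (hρ1 : ρ.trace = 1)
    (hγ : γ.PosSemidef) (hγ1 : γ.trace = 1) :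
    (1 / 2) * traceNorm (ρ - γ) ≤ Real.sqrt (1 - fidelity ρ γ) ∧
      fidelity ρ γ ≤ 1 - (1 / 4) * (traceNorm (ρ - γ)) ^ 2 := by
  set A := msqrt ρ with hAdef
  set B := msqrt γ with hBdef
  have hApsd : A.PosSemidef := msqrt_posSemidef hρ
  have hBpsd : B.PosSemidef := msqrt_posSemidef hγ
  have hA2 : A * A = ρ := msqrt_mul_self hρ
  have hB2 : B * B = γ := msqrt_mul_self hγ
  have hAH : Aᴴ = A := hApsd.isHermitian.eq
  have hBH : Bᴴ = B := hBpsd.isHermitian.eq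
  set Q := msqrt ((A * B)ᴴ * (A * B)) with hQdef
  have hQpsd : Q.PosSemidef := msqrt_posSemidef (posSemidef_conjTranspose_mul_self (A * B))
  set t := Q.trace.re with htdef
  have htr : Q.trace = (t : ℂ) := psd_trace_real hQpsd
  have ht0 : 0 ≤ t := psd_trace_nonneg hQpsd
  -- fidelity equals t²
  have hfid : fidelity ρ γ = t ^ 2 := by
    unfold fidelity
    have hXX : A * γ * A = (A * B) * (A * B)ᴴ := by
      rw [conjTranspose_mul, hAH, hBH, ← hB2]
      noncomm_ring
    rw [hXX, trace_msqrt_mul_conjTranspose (A * B), ← hQdef, htr]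
    simp
  -- unitary S with trace (A*B*S) = t
  obtain ⟨U₂, hU₂1, hU₂2, hAB⟩ := polar_decomp (A * B)
  rw [← hQdef] at hAB
  set S := U₂ᴴ with hSdef
  have hSS : S * Sᴴ = 1 := by
    rw [hSdef, conjTranspose_conjTranspose]; exact hU₂1
  have hSS' : Sᴴ * S = 1 := by
    rw [hSdef, conjTranspose_conjTranspose]; exact hU₂2
  have htrS : ((A * B) * S).trace = (t : ℂ) := by
    rw [hAB, hSdef, trace_mul_cycle, ← hSdef]
    rw [show U₂ᴴ * U₂ * Q = (U₂ᴴ * U₂) * Q from rfl, hU₂1, one_mul, htr]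
  -- X and Y
  set X := A - B * S with hXdef
  set Y := A + B * S with hYdef
  have hXH : Xᴴ = A - Sᴴ * B := by
    rw [hXdef, conjTranspose_sub, conjTranspose_mul, hAH, hBH]
  have hYH : Yᴴ = A + Sᴴ * B := by
    rw [hYdef, conjTranspose_add, conjTranspose_mul, hAH, hBH]
  have htA : (A * A).trace = 1 := by rw [hA2, hρ1]
  have htABS : (A * (B * S)).trace = (t : ℂ) := by rw [← mul_assoc]; exact htrS
  have htSBA : ((Sᴴ * B) * A).trace = (t : ℂ) := by
    have he : (Sᴴ * B) * A = ((A * B) * S)ᴴ := by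
      rw [conjTranspose_mul, conjTranspose_mul, hAH, hBH, mul_assoc]
    rw [he, Matrix.trace_conjTranspose, htrS]
    exact Complex.conj_ofReal t
  have htSBBS : ((Sᴴ * B) * (B * S)).trace = 1 := by
    have he : (Sᴴ * B) * (B * S) = Sᴴ * (γ * S) := by
      rw [← hB2]; noncomm_ring
    rw [he, trace_mul_comm, mul_assoc, hSS, mul_one, hγ1]
  have hXXtr : (Xᴴ * X).trace = 2 - 2 * (t : ℂ) := by
    have he : Xᴴ * X = A * A - A * (B * S) - (Sᴴ * B) * A + (Sᴴ * B) * (B * S) := by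
      rw [hXH, hXdef]; noncomm_ring
    rw [he, trace_add, trace_sub, trace_sub, htA, htABS, htSBA, htSBBS]
    ring
  have hYYtr : (Yᴴ * Y).trace = 2 + 2 * (t : ℂ) := by
    have he : Yᴴ * Y = A * A + A * (B * S) + (Sᴴ * B) * A + (Sᴴ * B) * (B * S) := by
      rw [hYH, hYdef]; noncomm_ring
    rw [he, trace_add, trace_add, trace_add, htA, htABS, htSBA, htSBBS]
    ring
  have hXXre : (Xᴴ * X).trace.re = 2 - 2 * t := by rw [hXXtr]; simp
  have hYYre : (Yᴴ * Y).trace.re = 2 + 2 * t := by rw [hYYtr]; simp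
  have h2m : 0 ≤ 2 - 2 * t := by
    rw [← hXXre]; exact psd_trace_nonneg (posSemidef_conjTranspose_mul_self X)
  have h2p : 0 ≤ 2 + 2 * t := by
    rw [← hYYre]; exact psd_trace_nonneg (posSemidef_conjTranspose_mul_self Y)
  have hsum : X * Yᴴ + Y * Xᴴ = (ρ - γ) + (ρ - γ) := by
    have hBSB : B * S * Sᴴ * B = γ := by
      rw [mul_assoc B S Sᴴ, hSS, mul_one, hB2]
    calc X * Yᴴ + Y * Xᴴ = (A - B * S) * (A + Sᴴ * B) + (A + B * S) * (A - Sᴴ * B) := by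
          rw [hXH, hYH, hXdef, hYdef]
      _ = A * A - B * S * Sᴴ * B + (A * A - B * S * Sᴴ * B) := by noncomm_ring
      _ = (ρ - γ) + (ρ - γ) := by rw [hBSB, hA2]
  -- polar decomposition of the difference
  obtain ⟨U, hU1, hU2, hM⟩ := polar_decomp (ρ - γ)
  have hUH : (Uᴴ)ᴴ * Uᴴ = 1 := by rw [conjTranspose_conjTranspose]; exact hU2
  set P := msqrt ((ρ - γ)ᴴ * (ρ - γ)) with hPdef
  have hPpsd : P.PosSemidef := msqrt_posSemidef (posSemidef_conjTranspose_mul_self _)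
  have htrP : (Uᴴ * (ρ - γ)).trace = P.trace := by
    rw [hM, ← mul_assoc, hU1, one_mul]
  have hTN : traceNorm (ρ - γ) = P.trace.re := rfl
  have key : P.trace.re + P.trace.re
      ≤ Real.sqrt (2 - 2 * t) * Real.sqrt (2 + 2 * t)
        + Real.sqrt (2 + 2 * t) * Real.sqrt (2 - 2 * t) := by
    have e1 : (Uᴴ * (X * Yᴴ)).trace.re ≤ traceNorm (X * Yᴴ) := re_trace_mul_le _ _ hUH
    have e2 : (Uᴴ * (Y * Xᴴ)).trace.re ≤ traceNorm (Y * Xᴴ) := re_trace_mul_le _ _ hUH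
    have e3 := traceNorm_mul_conjTranspose_le_aux X Y
    have e4 := traceNorm_mul_conjTranspose_le_aux Y X
    rw [hXXre, hYYre] at e3 e4
    have e5 : (Uᴴ * (X * Yᴴ)).trace + (Uᴴ * (Y * Xᴴ)).trace = P.trace + P.trace := by
      rw [← trace_add, ← mul_add, hsum, mul_add, trace_add, htrP]
    have e6 : (Uᴴ * (X * Yᴴ)).trace.re + (Uᴴ * (Y * Xᴴ)).trace.re
        = P.trace.re + P.trace.re := by
      have := congrArg Complex.re e5
      simpa using this
    linarith
  have hprod : Real.sqrt (2 - 2 * t) * Real.sqrt (2 + 2 * t)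
      = 2 * Real.sqrt (1 - t ^ 2) := by
    rw [← Real.sqrt_mul h2m]
    rw [show (2 - 2 * t) * (2 + 2 * t) = 4 * (1 - t ^ 2) from by ring]
    rw [Real.sqrt_mul (by norm_num : (0:ℝ) ≤ 4)]
    rw [show (4:ℝ) = 2 ^ 2 from by norm_num, Real.sqrt_sq (by norm_num : (0:ℝ) ≤ 2)]
  have h1t : 0 ≤ 1 - t ^ 2 := by nlinarith
  have hTNnn : 0 ≤ traceNorm (ρ - γ) := traceNorm_nonneg_aux _
  have hd : traceNorm (ρ - γ) ≤ 2 * Real.sqrt (1 - t ^ 2) := by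
    rw [hTN]; linarith [key, hprod]
  constructor
  · rw [hfid]
    linarith [hd, hTN]
  · rw [hfid]
    have hs := Real.sq_sqrt h1t
    nlinarith [hTNnn, hd, Real.sqrt_nonneg (1 - t ^ 2)]
end

section
/- Binary fidelity scalar inequality: for nonnegative real numbers a, b, c, d with a + b = 1 and c + d = 1, one has (√(a·c) + √(b·d))² ≤ 1 − (a − c)². -/
/-- **Binary fidelity scalar inequality**: for nonnegative reals `a, b, c, d` with
`a + b = 1` and `c + d = 1`, one has `(√(a·c) + √(b·d))² ≤ 1 − (a − c)²`. -/
theorem binary_fidelity_scalar_inequality (a b c d : ℝ)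
    (ha : 0 ≤ a) (hb : 0 ≤ b) (hc : 0 ≤ c) (hd : 0 ≤ d)
    (hab : a + b = 1) (hcd : c + d = 1) :
    (Real.sqrt (a * c) + Real.sqrt (b * d)) ^ 2 ≤ 1 - (a - c) ^ 2 := by
  set x := Real.sqrt (a * c) with hxdef
  set y := Real.sqrt (b * d) with hydef
  have hx : x ^ 2 = a * c := Real.sq_sqrt (by positivity)
  have hy : y ^ 2 = b * d := Real.sq_sqrt (by positivity)
  have hxn : 0 ≤ x := Real.sqrt_nonneg _
  have hyn : 0 ≤ y := Real.sqrt_nonneg _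
  set u := Real.sqrt (a * d) with hudef
  set v := Real.sqrt (b * c) with hvdef
  have hu : u ^ 2 = a * d := Real.sq_sqrt (by positivity)
  have hv : v ^ 2 = b * c := Real.sq_sqrt (by positivity)
  have hun : 0 ≤ u := Real.sqrt_nonneg _
  have hvn : 0 ≤ v := Real.sqrt_nonneg _
  have hxyuv : x * y = u * v := by
    rw [hxdef, hydef, hudef, hvdef, ← Real.sqrt_mul (by positivity),
      ← Real.sqrt_mul (by positivity)]
    ring_nf
  have h1 : (u + v) ^ 2 ≤ 1 := by
    nlinarith [sq_nonneg (x - y), hxyuv]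
  have h2 : 0 ≤ (u - v) ^ 2 * (1 - (u + v) ^ 2) :=
    mul_nonneg (sq_nonneg _) (by linarith)
  have hac : a - c = u ^ 2 - v ^ 2 := by rw [hu, hv]; nlinarith
  have key : (a - c) ^ 2 = (u - v) ^ 2 * (u + v) ^ 2 := by rw [hac]; ring
  have h3 : (a - c) ^ 2 ≤ (u - v) ^ 2 := by nlinarith [h2, key]
  have huv : 2 * (u * v) ≤ a * d + b * c - (a - c) ^ 2 := by
    nlinarith [sq_nonneg (u - v), h3]
  have hsum : a * c + b * d + a * d + b * c = 1 := by
    calc a * c + b * d + a * d + b * c = (a + b) * (c + d) := by ring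
      _ = 1 := by rw [hab, hcd]; ring
  have hexp : (x + y) ^ 2 = a * c + b * d + 2 * (u * v) := by
    have : (x + y) ^ 2 = x ^ 2 + y ^ 2 + 2 * (x * y) := by ring
    rw [this, hx, hy, hxyuv]
  linarith [hexp, huv, hsum]
end

section
/- Positive-part projection attains half the trace distance: let A be a Hermitian complex matrix on a finite nonempty index type ι with trace A = 0. Then there exists an orthogonal projection P (a Hermitian idempotent complex matrix) commuting with A such that P·A is positive semidefinite and tr(P·A) = (1/2)·‖A‖₁. -/
open Matrix
open scoped ComplexOrder
/-- **Positive-part projection attains half the trace distance**: if `A` is Hermitian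
with `trace A = 0`, there is an orthogonal projection `P` commuting with `A` such that
`P·A` is positive semidefinite and `tr(P·A) = (1/2)·‖A‖₁`. -/
theorem positive_part_projection_half_trace_distance {ι : Type*} [Fintype ι] [DecidableEq ι]
    [Nonempty ι] (A : Matrix ι ι ℂ) (hA : Aᴴ = A) (htr : A.trace = 0) :
    ∃ P : Matrix ι ι ℂ, Pᴴ = P ∧ P * P = P ∧ P * A = A * P ∧
      (P * A).PosSemidef ∧ (P * A).trace = (((1 / 2) * traceNorm A : ℝ) : ℂ) := by
  classical
  have hH : A.IsHermitian := hA
  set U : Matrix ι ι ℂ := (hH.eigenvectorUnitary : Matrix ι ι ℂ) with hUdef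
  have hU : star U * U = 1 := (Matrix.mem_unitaryGroup_iff').mp hH.eigenvectorUnitary.2
  set lam : ι → ℝ := hH.eigenvalues with hlam
  -- conjugation of a real diagonal
  let D : (ι → ℝ) → Matrix ι ι ℂ := fun d => U * diagonal (fun i => (d i : ℂ)) * star U
  have hDA : A = D lam := hH.spectral_theorem
  have hDmul : ∀ d e, D d * D e = D (fun i => d i * e i) := by
    intro d e
    show (U * diagonal (fun i => ((d i : ℂ))) * star U) *
        (U * diagonal (fun i => ((e i : ℂ))) * star U)
        = U * diagonal (fun i => ((d i * e i : ℝ) : ℂ)) * star U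
    have hfun : (fun i => (d i : ℂ) * (e i : ℂ))
        = fun i => ((d i * e i : ℝ) : ℂ) := by
      funext i; push_cast; rfl
    simp only [mul_assoc]
    rw [← mul_assoc (star U) U, hU, one_mul,
      ← mul_assoc (diagonal fun i => ((d i : ℂ))), diagonal_mul_diagonal, hfun]
  have hDtrace : ∀ d, (D d).trace = ∑ i, (d i : ℂ) := by
    intro d
    show (U * diagonal (fun i => ((d i : ℂ))) * star U).trace = _
    rw [Matrix.trace_mul_cycle, hU, one_mul, trace_diagonal]
  have hDconj : ∀ d, (D d)ᴴ = D d := by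
    intro d
    show (U * diagonal (fun i => ((d i : ℂ))) * star U)ᴴ
        = U * diagonal (fun i => ((d i : ℂ))) * star U
    have hstar : (star fun i => ((d i : ℂ))) = fun i => ((d i : ℂ)) := by
      funext i
      simp [Complex.star_def, Complex.conj_ofReal]
    simp only [star_eq_conjTranspose, conjTranspose_mul, conjTranspose_conjTranspose,
      diagonal_conjTranspose, hstar, mul_assoc]
  have hDpos : ∀ d, (∀ i, 0 ≤ d i) → (D d).PosSemidef := by
    intro d hd
    have hdiag : (diagonal (fun i => (d i : ℂ))).PosSemidef := by
      refine posSemidef_diagonal_iff.mpr fun i => ?_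
      exact_mod_cast Complex.zero_le_real.mpr (hd i)
    have := hdiag.mul_mul_conjTranspose_same U
    exact this
  -- the positive-part projection
  set f : ι → ℝ := fun i => if 0 ≤ lam i then 1 else 0 with hf
  refine ⟨D f, hDconj f, ?_, ?_, ?_, ?_⟩
  · have hff : (fun i => f i * f i) = f := by
      funext i
      by_cases h : 0 ≤ lam i <;> simp [hf, h]
    rw [hDmul, hff]
  · have hcomm : (fun i => f i * lam i) = fun i => lam i * f i :=
      funext fun i => mul_comm _ _
    conv_lhs => rw [hDA, hDmul, hcomm]
    conv_rhs => rw [hDA, hDmul]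
  · rw [hDA, hDmul]
    refine hDpos _ fun i => ?_
    rcases le_or_gt 0 (lam i) with h | h
    · simpa [hf, if_pos h] using h
    · simp [hf, if_neg (not_le.mpr h)]
  · -- trace computation
    have hPSD : (Aᴴ * A).PosSemidef := posSemidef_conjTranspose_mul_self A
    have habs : msqrt (Aᴴ * A) = D (fun i => |lam i|) := by
      have h1 : (D fun i => |lam i|).PosSemidef := hDpos _ fun i => abs_nonneg _
      have h2 : (D fun i => |lam i|) ^ 2 = Aᴴ * A := by
        have hfun : (fun i => |lam i| * |lam i|) = fun i => lam i * lam i :=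
          funext fun i => abs_mul_abs_self _
        rw [pow_two, hDmul, hfun, hA]
        conv_rhs => rw [hDA, hDmul]
      rw [msqrt, dif_pos hPSD]
      open scoped MatrixOrder in
      have e1 : CFC.sqrt (Aᴴ * A) = D (fun i => |lam i|) :=
        CFC.sqrt_unique (by rw [← pow_two]; exact h2) h1.nonneg
      open scoped MatrixOrder in
      rw [← e1, CFC.sqrt_eq_cfc, cfc_nnreal_eq_real _ (Aᴴ * A) hPSD.nonneg, hPSD.1.cfc_eq]
      rw [IsHermitian.cfc, Unitary.conjStarAlgAut_apply]
      unfold Real.sqrt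
      rfl
    have hsum0 : ∑ i, lam i = 0 := by
      have h0 := htr
      rw [hDA, hDtrace] at h0
      have h1 : ((∑ i, lam i : ℝ) : ℂ) = 0 := by push_cast; exact h0
      exact_mod_cast h1
    have htn : traceNorm A = ∑ i, |lam i| := by
      rw [traceNorm, habs, hDtrace]
      simp
    have key : ∑ i, (f i * lam i) = (1 / 2) * ∑ i, |lam i| := by
      have hpt : ∀ i, f i * lam i = |lam i| / 2 + lam i / 2 := by
        intro i
        rcases le_or_gt 0 (lam i) with h | h
        · rw [hf]; simp only [if_pos h]; rw [abs_of_nonneg h]; ring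
        · rw [hf]; simp only [if_neg (not_le.mpr h)]; rw [abs_of_neg h]; ring
      simp_rw [hpt]
      rw [Finset.sum_add_distrib, ← Finset.sum_div, ← Finset.sum_div, hsum0]
      ring
    have htr2 : (D f * A).trace = ∑ i, ((f i * lam i : ℝ) : ℂ) := by
      conv_lhs => rw [hDA]
      rw [hDmul, hDtrace]
    rw [htr2, htn, ← key]
    push_cast
    rfl
end

section
/- Union bound for commuting projections: let q₁, …, q_n be pairwise commuting orthogonal projections (Hermitian idempotent complex matrices) on a finite nonempty index type ι. Then 1 − ∏_{j=1}^n (1 − q_j) ≤ ∑_{j=1}^n q_j in the Loewner order, i.e. the matrix ∑_{j=1}^n q_j − (1 − ∏_{j=1}^n (1 − q_j)) is positive semidefinite; here 1 denotes the identity matrix. -/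
open Matrix
open scoped ComplexOrder

private lemma proj_prod_aux {ι : Type*} [Fintype ι] [DecidableEq ι]
    (n : ℕ) (p : Fin n → Matrix ι ι ℂ)
    (hHerm : ∀ j, (p j)ᴴ = p j) (hIdem : ∀ j, p j * p j = p j)
    (hComm : ∀ i j, p i * p j = p j * p i) :
    (List.ofFn p).prodᴴ = (List.ofFn p).prod ∧
      (List.ofFn p).prod * (List.ofFn p).prod = (List.ofFn p).prod ∧
      ∀ A : Matrix ι ι ℂ, (∀ j, A * p j = p j * A) →
        A * (List.ofFn p).prod = (List.ofFn p).prod * A := by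
  induction n with
  | zero => simp
  | succ n ih =>
    obtain ⟨hH, hI, hC⟩ := ih (fun j => p j.succ) (fun j => hHerm _) (fun j => hIdem _)
      (fun i j => hComm _ _)
    set P := (List.ofFn fun j : Fin n => p j.succ).prod with hPdef
    have hlist : (List.ofFn p).prod = p 0 * P := by
      rw [List.ofFn_succ, List.prod_cons]
    have h0P : p 0 * P = P * p 0 := hC (p 0) (fun j => hComm 0 j.succ)
    refine ⟨?_, ?_, ?_⟩
    · rw [hlist, conjTranspose_mul, hH, hHerm, h0P]
    · rw [hlist]
      calc p 0 * P * (p 0 * P) = p 0 * (P * p 0) * P := by noncomm_ring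
        _ = p 0 * (p 0 * P) * P := by rw [h0P]
        _ = (p 0 * p 0) * (P * P) := by noncomm_ring
        _ = p 0 * P := by rw [hIdem, hI]
    · intro A hA
      have h1 : A * P = P * A := hC A (fun j => hA j.succ)
      rw [hlist, ← mul_assoc, hA 0, mul_assoc, h1, ← mul_assoc]

private lemma proj_psd {ι : Type*} [Fintype ι] [DecidableEq ι]
    (P : Matrix ι ι ℂ) (hH : Pᴴ = P) (hI : P * P = P) : P.PosSemidef := by
  have : P = Pᴴ * P := by rw [hH, hI]
  rw [this]; exact posSemidef_conjTranspose_mul_self P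

/-- **Union bound for commuting projections**: if `q 1, …, q n` are pairwise commuting
orthogonal projections, then `1 − ∏ (1 − q j) ≤ ∑ q j` in the Loewner order, i.e.
`∑ q j − (1 − ∏ (1 − q j))` is positive semidefinite. -/
theorem union_bound_commuting_projections {ι : Type*} [Fintype ι] [DecidableEq ι] [Nonempty ι]
    (n : ℕ) (q : Fin n → Matrix ι ι ℂ)
    (hHerm : ∀ j, (q j)ᴴ = q j) (hIdem : ∀ j, q j * q j = q j)
    (hComm : ∀ i j, i ≠ j → q i * q j = q j * q i) :
    ((∑ j, q j) -
        ((1 : Matrix ι ι ℂ) -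
          (List.ofFn fun j : Fin n => (1 : Matrix ι ι ℂ) - q j).prod)).PosSemidef := by
  induction n with
  | zero =>
    simpa using (Matrix.PosSemidef.zero (n := ι) (R := ℂ))
  | succ n ih =>
    have hComm' : ∀ i j, q i * q j = q j * q i := by
      intro i j
      rcases eq_or_ne i j with rfl | h
      · rfl
      · exact hComm i j h
    have hC1 : ∀ i j : Fin (n+1), (1 - q i) * (1 - q j) = (1 - q j) * (1 - q i) := by
      intro i j
      simp only [mul_sub, sub_mul, mul_one, one_mul, hComm' i j]
      abel
    -- properties of the tail product
    obtain ⟨hH, hI, hC⟩ := proj_prod_aux n (fun j : Fin n => 1 - q j.succ)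
      (by intro j; simp [conjTranspose_sub, hHerm]) (fun j => by
        simp only [mul_sub, sub_mul, mul_one, one_mul, hIdem j.succ]; abel)
      (fun i j => hC1 _ _)
    set P := (List.ofFn fun j : Fin n => (1 : Matrix ι ι ℂ) - q j.succ).prod with hPdef
    have hlist : (List.ofFn fun j : Fin (n+1) => (1 : Matrix ι ι ℂ) - q j).prod
        = (1 - q 0) * P := by
      rw [List.ofFn_succ, List.prod_cons]
    have IH := ih (fun j => q j.succ) (fun j => hHerm _) (fun j => hIdem _)
      (fun i j h => hComm _ _ (fun he => h (Fin.succ_injective n he)))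
    -- q 0 commutes with P
    have hq0P : q 0 * P = P * q 0 := by
      refine hC (q 0) (fun j => ?_)
      rw [mul_sub, sub_mul, mul_one, one_mul, hComm' 0 j.succ]
    -- 1 - P is a projection, hence PSD
    have h1P : ((1 : Matrix ι ι ℂ) - P).PosSemidef := by
      refine proj_psd _ ?_ ?_
      · simp [conjTranspose_sub, hH]
      · simp only [mul_sub, sub_mul, mul_one, one_mul, hI]; abel
    -- q 0 * (1 - P) is PSD
    have hq0 : (q 0 * (1 - P)).PosSemidef := by
      have key : q 0 * (1 - P) = q 0 * (1 - P) * (q 0)ᴴ := by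
        rw [hHerm]
        have h1 : q 0 * (1 - P) = (1 - P) * q 0 := by
          rw [mul_sub, sub_mul, mul_one, one_mul, hq0P]
        rw [mul_assoc, ← h1, ← mul_assoc, hIdem]
      rw [key]
      exact h1P.mul_mul_conjTranspose_same (q 0)
    -- decompose the goal
    have hsum : (∑ j : Fin (n+1), q j) = q 0 + ∑ j : Fin n, q j.succ :=
      Fin.sum_univ_succ q
    have hdecomp :
        ((∑ j : Fin (n+1), q j) -
            ((1 : Matrix ι ι ℂ) -
              (List.ofFn fun j : Fin (n+1) => (1 : Matrix ι ι ℂ) - q j).prod))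
          = ((∑ j : Fin n, q j.succ) - (1 - P)) + q 0 * (1 - P) := by
      rw [hsum, hlist]; noncomm_ring
    rw [hdecomp]
    exact IH.add hq0
end

section
/- Projected square estimate (Lemma on ‖D p₁‖ ≤ Λ, integral form): let d ≥ 1, let Φ : ℝ^d → ℂ be measurable with ∫ |Φ(x)|² dx = 1, set ρ(x) := |Φ(x)|², let V : ℝ^d → ℝ be measurable, assume W(x) := ∫ V(x−y)·ρ(y) dy converges absolutely for almost every x, and set d(x,y) := V(x−y) − W(x). Assume Λ² := essSup_{y ∈ ℝ^d} ∫ ρ(x) · |d(x,y)|² dx is finite. Then for every Ψ ∈ L²(ℝ^d × ℝ^d; ℂ), with (p₁Ψ)(x,y) := Φ(x) · ∫ conj(Φ(x')) · Ψ(x',y) dx', one has ∫∫ |d(x,y)|² · |(p₁Ψ)(x,y)|² dx dy ≤ Λ² · ∫∫ |Ψ(x,y)|² dx dy. -/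
open MeasureTheory
open scoped ENNReal NNReal

/-- **Projected square estimate** (`‖D p₁‖ ≤ Λ`, integral form): with
`d(x,y) = V(x−y) − W(x)`, `Λ² = essSup_y ∫ ρ(x)|d(x,y)|² dx` finite, and
`(p₁Ψ)(x,y) = Φ(x) ∫ conj(Φ(x')) Ψ(x',y) dx'`, one has
`∫∫ |d(x,y)|² |(p₁Ψ)(x,y)|² dx dy ≤ Λ² ∫∫ |Ψ|²`. -/
theorem projected_square_estimate
    (d : ℕ) (hd : 1 ≤ d)
    (Φ : EuclideanSpace ℝ (Fin d) → ℂ) (hΦm : Measurable Φ)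
    (hΦ1 : ∫ x, ‖Φ x‖ ^ 2 = 1)
    (V : EuclideanSpace ℝ (Fin d) → ℝ) (hVm : Measurable V)
    (W : EuclideanSpace ℝ (Fin d) → ℝ)
    (hW : W = fun x => ∫ y, V (x - y) * ‖Φ y‖ ^ 2)
    (hWabs : ∀ᵐ x ∂(volume : Measure (EuclideanSpace ℝ (Fin d))),
      Integrable fun y => V (x - y) * ‖Φ y‖ ^ 2)
    (dd : EuclideanSpace ℝ (Fin d) → EuclideanSpace ℝ (Fin d) → ℝ)
    (hdd : dd = fun x y => V (x - y) - W x)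
    (Λsq : ENNReal)
    (hΛsq : Λsq = essSup
      (fun y => ∫⁻ x, ENNReal.ofReal (‖Φ x‖ ^ 2 * (dd x y) ^ 2)
        ∂(volume : Measure (EuclideanSpace ℝ (Fin d))))
      (volume : Measure (EuclideanSpace ℝ (Fin d))))
    (hΛfin : Λsq ≠ ⊤)
    (Ψ : EuclideanSpace ℝ (Fin d) × EuclideanSpace ℝ (Fin d) → ℂ)
    (hΨ : MemLp Ψ 2)
    (p1Ψ : EuclideanSpace ℝ (Fin d) × EuclideanSpace ℝ (Fin d) → ℂ)
    (hp1Ψ : p1Ψ = fun z => Φ z.1 * ∫ x', (starRingEnd ℂ) (Φ x') * Ψ (x', z.2)) :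
    ∫⁻ z : EuclideanSpace ℝ (Fin d) × EuclideanSpace ℝ (Fin d),
        ENNReal.ofReal ((dd z.1 z.2) ^ 2 * ‖p1Ψ z‖ ^ 2)
      ≤ Λsq * ∫⁻ z : EuclideanSpace ℝ (Fin d) × EuclideanSpace ℝ (Fin d),
          ENNReal.ofReal (‖Ψ z‖ ^ 2) := by
  classical
  -- ρ = ‖Φ‖² is integrable (otherwise its integral would be 0, not 1)
  have hρ_int : Integrable (fun x : EuclideanSpace ℝ (Fin d) => ‖Φ x‖ ^ 2) := by
    by_contra h
    rw [integral_undef h] at hΦ1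
    norm_num at hΦ1
  -- measurability of W and dd
  have hWm : Measurable W := by
    rw [hW]
    have h1 : Measurable fun p : (EuclideanSpace ℝ (Fin d)) × (EuclideanSpace ℝ (Fin d)) => V (p.1 - p.2) * ‖Φ p.2‖ ^ 2 :=
      (hVm.comp (measurable_fst.sub measurable_snd)).mul
        (((hΦm.norm).pow_const 2).comp measurable_snd)
    exact h1.stronglyMeasurable.integral_prod_right'.measurable
  have hddm : Measurable fun z : (EuclideanSpace ℝ (Fin d)) × (EuclideanSpace ℝ (Fin d)) => dd z.1 z.2 := by
    rw [hdd]
    exact (hVm.comp (measurable_fst.sub measurable_snd)).sub (hWm.comp measurable_fst)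
  -- the inner function g
  set g : EuclideanSpace ℝ (Fin d) → ℂ := fun y => ∫ x', (starRingEnd ℂ) (Φ x') * Ψ (x', y) with hg
  have hΨm : AEStronglyMeasurable Ψ ((volume : Measure (EuclideanSpace ℝ (Fin d))).prod volume) := by
    rw [← MeasureTheory.Measure.volume_eq_prod]; exact hΨ.1
  have hΦconj : Measurable fun x : EuclideanSpace ℝ (Fin d) => (starRingEnd ℂ) (Φ x) := by
    simp only [starRingEnd_apply]
    exact continuous_star.measurable.comp hΦm
  have hFm : AEStronglyMeasurable (fun z : (EuclideanSpace ℝ (Fin d)) × (EuclideanSpace ℝ (Fin d)) => (starRingEnd ℂ) (Φ z.1) * Ψ z)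
      ((volume : Measure (EuclideanSpace ℝ (Fin d))).prod volume) :=
    ((hΦconj.comp measurable_fst).aestronglyMeasurable).mul hΨm
  have hFswap : AEStronglyMeasurable
      (fun w : (EuclideanSpace ℝ (Fin d)) × (EuclideanSpace ℝ (Fin d)) => (starRingEnd ℂ) (Φ w.2) * Ψ (w.2, w.1))
      ((volume : Measure (EuclideanSpace ℝ (Fin d))).prod volume) := by
    have := hFm.comp_quasiMeasurePreserving
      (MeasureTheory.Measure.measurePreserving_swap (μ := (volume : Measure (EuclideanSpace ℝ (Fin d))))
        (ν := (volume : Measure (EuclideanSpace ℝ (Fin d))))).quasiMeasurePreserving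
    exact this
  have hg_meas : AEStronglyMeasurable g volume := hFswap.integral_prod_right'
  -- pointwise rewrite of the left integrand
  have key : ∀ z : (EuclideanSpace ℝ (Fin d)) × (EuclideanSpace ℝ (Fin d)), ENNReal.ofReal ((dd z.1 z.2) ^ 2 * ‖p1Ψ z‖ ^ 2)
      = ENNReal.ofReal (‖Φ z.1‖ ^ 2 * (dd z.1 z.2) ^ 2) * (‖g z.2‖₊ : ℝ≥0∞) ^ 2 := by
    intro z
    rw [hp1Ψ]
    simp only [norm_mul, mul_pow]
    rw [show (dd z.1 z.2) ^ 2 * (‖Φ z.1‖ ^ 2 * ‖g z.2‖ ^ 2)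
        = (‖Φ z.1‖ ^ 2 * (dd z.1 z.2) ^ 2) * ‖g z.2‖ ^ 2 by ring]
    rw [ENNReal.ofReal_mul (by positivity), ENNReal.ofReal_pow (norm_nonneg _),
      ofReal_norm, enorm_eq_nnnorm]
  -- pointwise rewrite of squares of nnnorms as ofReal
  have hc : ∀ c : ℂ, (‖c‖₊ : ℝ≥0∞) ^ (2 : ℝ) = ENNReal.ofReal (‖c‖ ^ 2) := by
    intro c
    rw [ENNReal.ofReal_pow (norm_nonneg _), ofReal_norm, enorm_eq_nnnorm,
      show ((2 : ℝ)) = ((2 : ℕ) : ℝ) by norm_num, ENNReal.rpow_natCast]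
  -- L² norm of Φ in lintegral form
  have hΦ2 : ∫⁻ x, (‖Φ x‖₊ : ℝ≥0∞) ^ (2 : ℝ) = 1 := by
    simp_rw [hc]
    rw [← ofReal_integral_eq_lintegral_ofReal hρ_int
      (Filter.Eventually.of_forall fun x => sq_nonneg _), hΦ1, ENNReal.ofReal_one]
  -- the slice measurability of Ψ
  have hslice : ∀ᵐ y ∂(volume : Measure (EuclideanSpace ℝ (Fin d))),
      AEStronglyMeasurable (fun x => Ψ (x, y)) volume := by
    have hsw : AEStronglyMeasurable (fun w : (EuclideanSpace ℝ (Fin d)) × (EuclideanSpace ℝ (Fin d)) => Ψ (w.2, w.1))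
        ((volume : Measure (EuclideanSpace ℝ (Fin d))).prod volume) := by
      have := hΨm.comp_quasiMeasurePreserving
        (MeasureTheory.Measure.measurePreserving_swap (μ := (volume : Measure (EuclideanSpace ℝ (Fin d))))
          (ν := (volume : Measure (EuclideanSpace ℝ (Fin d))))).quasiMeasurePreserving
      exact this
    exact hsw.prodMk_left
  -- Cauchy–Schwarz: pointwise a.e. bound on ‖g y‖²
  have gpt : ∀ᵐ y ∂(volume : Measure (EuclideanSpace ℝ (Fin d))),
      (‖g y‖₊ : ℝ≥0∞) ^ 2 ≤ ∫⁻ x, ENNReal.ofReal (‖Ψ (x, y)‖ ^ 2) := by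
    filter_upwards [hslice] with y hy
    have h1 : (‖g y‖₊ : ℝ≥0∞) ≤ ∫⁻ x, (‖Φ x‖₊ : ℝ≥0∞) * (‖Ψ (x, y)‖₊ : ℝ≥0∞) := by
      refine (enorm_integral_le_lintegral_enorm _).trans_eq ?_
      congr 1
      ext x
      simp only [enorm_eq_nnnorm, starRingEnd_apply, nnnorm_mul, nnnorm_star, ENNReal.coe_mul]
    have h2 : ∫⁻ x, (‖Φ x‖₊ : ℝ≥0∞) * (‖Ψ (x, y)‖₊ : ℝ≥0∞)
        ≤ (∫⁻ x, (‖Φ x‖₊ : ℝ≥0∞) ^ (2 : ℝ)) ^ ((1 : ℝ) / 2)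
          * (∫⁻ x, (‖Ψ (x, y)‖₊ : ℝ≥0∞) ^ (2 : ℝ)) ^ ((1 : ℝ) / 2) :=
      ENNReal.lintegral_mul_le_Lp_mul_Lq volume Real.HolderConjugate.two_two
        hΦm.enorm.aemeasurable hy.enorm
    rw [hΦ2, ENNReal.one_rpow, one_mul] at h2
    have h3 : (‖g y‖₊ : ℝ≥0∞) ^ 2
        ≤ ((∫⁻ x, (‖Ψ (x, y)‖₊ : ℝ≥0∞) ^ (2 : ℝ)) ^ ((1 : ℝ) / 2)) ^ 2 :=
      pow_le_pow_left₀ zero_le (h1.trans h2) 2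
    calc (‖g y‖₊ : ℝ≥0∞) ^ 2
        ≤ ((∫⁻ x, (‖Ψ (x, y)‖₊ : ℝ≥0∞) ^ (2 : ℝ)) ^ ((1 : ℝ) / 2)) ^ 2 := h3
      _ = ∫⁻ x, (‖Ψ (x, y)‖₊ : ℝ≥0∞) ^ (2 : ℝ) := by
          rw [← ENNReal.rpow_natCast _ 2, ← ENNReal.rpow_mul]
          norm_num
      _ = ∫⁻ x, ENNReal.ofReal (‖Ψ (x, y)‖ ^ 2) := by simp_rw [hc]
  -- main chain
  have hΨ2m : AEMeasurable (fun z : (EuclideanSpace ℝ (Fin d)) × (EuclideanSpace ℝ (Fin d)) => ENNReal.ofReal (‖Ψ z‖ ^ 2))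
      ((volume : Measure (EuclideanSpace ℝ (Fin d))).prod volume) :=
    ((hΨm.norm.aemeasurable.pow_const 2).ennreal_ofReal)
  have hIntegrandm : AEMeasurable
      (fun z : (EuclideanSpace ℝ (Fin d)) × (EuclideanSpace ℝ (Fin d)) => ENNReal.ofReal (‖Φ z.1‖ ^ 2 * (dd z.1 z.2) ^ 2)
        * (‖g z.2‖₊ : ℝ≥0∞) ^ 2) ((volume : Measure (EuclideanSpace ℝ (Fin d))).prod volume) := by
    refine AEMeasurable.fun_mul ?_ ?_
    · exact ((((hΦm.norm.pow_const 2).comp measurable_fst).mul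
        (hddm.pow_const 2)).ennreal_ofReal).aemeasurable
    · exact (hg_meas.enorm.pow_const 2).comp_quasiMeasurePreserving
        MeasureTheory.Measure.quasiMeasurePreserving_snd
  calc ∫⁻ z : (EuclideanSpace ℝ (Fin d)) × (EuclideanSpace ℝ (Fin d)), ENNReal.ofReal ((dd z.1 z.2) ^ 2 * ‖p1Ψ z‖ ^ 2)
      = ∫⁻ z : (EuclideanSpace ℝ (Fin d)) × (EuclideanSpace ℝ (Fin d)), ENNReal.ofReal (‖Φ z.1‖ ^ 2 * (dd z.1 z.2) ^ 2)
          * (‖g z.2‖₊ : ℝ≥0∞) ^ 2 := by simp_rw [key]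
    _ = ∫⁻ y, ∫⁻ x, ENNReal.ofReal (‖Φ x‖ ^ 2 * (dd x y) ^ 2)
          * (‖g y‖₊ : ℝ≥0∞) ^ 2 := by
        rw [MeasureTheory.Measure.volume_eq_prod, MeasureTheory.lintegral_prod_symm _
          hIntegrandm]
    _ = ∫⁻ y, (∫⁻ x, ENNReal.ofReal (‖Φ x‖ ^ 2 * (dd x y) ^ 2))
          * (‖g y‖₊ : ℝ≥0∞) ^ 2 := by
        refine lintegral_congr fun y => ?_
        exact lintegral_mul_const _ (((hΦm.norm.pow_const 2).mul
          ((hddm.comp (measurable_id.prodMk measurable_const)).pow_const 2)).ennreal_ofReal)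
    _ ≤ ∫⁻ y, Λsq * (‖g y‖₊ : ℝ≥0∞) ^ 2 := by
        refine lintegral_mono_ae ?_
        have := ae_le_essSup (μ := (volume : Measure (EuclideanSpace ℝ (Fin d))))
          (f := fun y => ∫⁻ x, ENNReal.ofReal (‖Φ x‖ ^ 2 * (dd x y) ^ 2))
        filter_upwards [this] with y hy
        exact mul_le_mul_left (hΛsq ▸ hy) _
    _ = Λsq * ∫⁻ y, (‖g y‖₊ : ℝ≥0∞) ^ 2 := lintegral_const_mul' _ _ hΛfin
    _ ≤ Λsq * ∫⁻ y, ∫⁻ x, ENNReal.ofReal (‖Ψ (x, y)‖ ^ 2) := by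
        exact mul_le_mul_right (lintegral_mono_ae gpt) _
    _ = Λsq * ∫⁻ z : (EuclideanSpace ℝ (Fin d)) × (EuclideanSpace ℝ (Fin d)), ENNReal.ofReal (‖Ψ z‖ ^ 2) := by
        rw [MeasureTheory.Measure.volume_eq_prod,
          MeasureTheory.lintegral_prod_symm _ hΨ2m]
end

section
/- Projected square bound for L^{2r} interactions (Proposition 5.1): let d ≥ 1, let r ∈ [1, ∞) and let s be the conjugate exponent of r (so 1/r + 1/s = 1, with s = ∞ when r = 1). Let V : ℝ^d → ℝ with V ∈ L^{2r}(ℝ^d), and let ρ : ℝ^d → ℝ be measurable, nonnegative, with ∫ ρ = 1 and ρ ∈ L^s(ℝ^d). Assume W(x) := ∫ V(x−y)·ρ(y) dy converges absolutely for almost every x. Then for almost every y ∈ ℝ^d, ∫ ρ(x) · |V(x−y) − W(x)|² dx ≤ 4 · ‖V‖²_{L^{2r}} · ‖ρ‖_{L^s}. In particular, essSup_{y} ∫ ρ(x)·|V(x−y) − W(x)|² dx ≤ 4 · ‖V‖²_{L^{2r}} · ‖ρ‖_{L^s}. -/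
open MeasureTheory
open scoped ENNReal

/-- **Projected square bound for `L^{2r}` interactions**: if `V ∈ L^{2r}`,
`ρ ≥ 0`, `∫ρ = 1`, `ρ ∈ L^s` with `s` the conjugate exponent of `r ∈ [1,∞)`, and
`W = V ∗ ρ` converges absolutely a.e., then for a.e. `y`,
`∫ ρ(x)|V(x−y) − W(x)|² dx ≤ 4‖V‖²_{L^{2r}}‖ρ‖_{L^s}`, and in particular the
essential supremum over `y` of the left-hand side obeys the same bound. -/
theorem projected_square_bound_L2r
    (d : ℕ) (hd : 1 ≤ d)
    (r s : ENNReal) (hr : 1 ≤ r) (hrtop : r ≠ ⊤) (hrs : r⁻¹ + s⁻¹ = 1)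
    (V : EuclideanSpace ℝ (Fin d) → ℝ) (hV : MemLp V (2 * r))
    (ρ : EuclideanSpace ℝ (Fin d) → ℝ) (hρm : Measurable ρ)
    (hρnn : ∀ x, 0 ≤ ρ x) (hρ1 : ∫ x, ρ x = 1) (hρs : MemLp ρ s)
    (W : EuclideanSpace ℝ (Fin d) → ℝ)
    (hW : W = fun x => ∫ y, V (x - y) * ρ y)
    (hWabs : ∀ᵐ x ∂(volume : Measure (EuclideanSpace ℝ (Fin d))),
      Integrable fun y => V (x - y) * ρ y) :
    (∀ᵐ y ∂(volume : Measure (EuclideanSpace ℝ (Fin d))),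
        (∫⁻ x, ENNReal.ofReal (ρ x * (V (x - y) - W x) ^ 2))
          ≤ ENNReal.ofReal
              (4 * (eLpNorm V (2 * r) volume).toReal ^ 2 * (eLpNorm ρ s volume).toReal)) ∧
      essSup
          (fun y => ∫⁻ x, ENNReal.ofReal (ρ x * (V (x - y) - W x) ^ 2)
            ∂(volume : Measure (EuclideanSpace ℝ (Fin d))))
          (volume : Measure (EuclideanSpace ℝ (Fin d)))
        ≤ ENNReal.ofReal
            (4 * (eLpNorm V (2 * r) volume).toReal ^ 2 * (eLpNorm ρ s volume).toReal) := by
  set μ : Measure (EuclideanSpace ℝ (Fin d)) := volume with hμdef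
  set P : EuclideanSpace ℝ (Fin d) → ℝ≥0∞ := fun x => ENNReal.ofReal (ρ x) with hPdef
  have hPm : Measurable P := hρm.ennreal_ofReal
  have hPeq : ∀ x, P x = (‖ρ x‖₊ : ℝ≥0∞) := fun x =>
    (Real.enorm_eq_ofReal (hρnn x)).symm
  have hPnetop : ∀ x, P x ≠ ⊤ := fun x => ENNReal.ofReal_ne_top
  have hVae : AEStronglyMeasurable V μ := hV.1
  set G : EuclideanSpace ℝ (Fin d) → ℝ≥0∞ := fun x => (‖V x‖₊ : ℝ≥0∞) ^ 2 with hGdef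
  set K : ℝ≥0∞ := eLpNorm V (2 * r) μ ^ 2 * eLpNorm ρ s μ with hKdef
  have hK : K ≠ ⊤ :=
    ENNReal.mul_ne_top (ENNReal.pow_ne_top hV.2.ne) hρs.2.ne
  -- measurability of translated pieces
  have hVy : ∀ y : EuclideanSpace ℝ (Fin d), AEStronglyMeasurable (fun x => V (x - y)) μ := fun y =>
    hVae.comp_quasiMeasurePreserving
      (measurePreserving_sub_right μ y).quasiMeasurePreserving
  have hVx : ∀ x : EuclideanSpace ℝ (Fin d), AEStronglyMeasurable (fun z => V (x - z)) μ := fun x =>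
    hVae.comp_quasiMeasurePreserving
      (Measure.measurePreserving_sub_left μ x).quasiMeasurePreserving
  have hGy : ∀ y : EuclideanSpace ℝ (Fin d), AEMeasurable (fun x => G (x - y)) μ := fun y =>
    ((hVy y).enorm).pow_const 2
  have hGx : ∀ x : EuclideanSpace ℝ (Fin d), AEMeasurable (fun z => G (x - z)) μ := fun x =>
    ((hVx x).enorm).pow_const 2
  -- Hölder step
  have holder : ∀ y : EuclideanSpace ℝ (Fin d), (∫⁻ x, G (x - y) * P x ∂μ) ≤ K := by
    intro y
    have hVy2 : AEStronglyMeasurable (fun x => (V (x - y)) ^ 2) μ := (hVy y).pow 2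
    calc (∫⁻ x, G (x - y) * P x ∂μ)
        = eLpNorm (fun x => (V (x - y)) ^ 2 * ρ x) 1 μ := by
          rw [eLpNorm_one_eq_lintegral_enorm]
          refine lintegral_congr fun x => ?_
          rw [enorm_eq_nnnorm, nnnorm_mul, ENNReal.coe_mul, hPeq x, nnnorm_pow, ENNReal.coe_pow]
      _ ≤ eLpNorm (fun x => (V (x - y)) ^ 2) r μ * eLpNorm ρ s μ := by
          refine le_trans (eLpNorm_le_eLpNorm_mul_eLpNorm_of_nnnorm (p := r) (q := s) (r := 1) hVy2
            hρm.aestronglyMeasurable (· * ·) 1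
            (Filter.Eventually.of_forall fun x => by simp [nnnorm_mul])
            (hpqr := ⟨by rw [inv_one]; exact hrs⟩)) (le_of_eq (by rw [ENNReal.coe_one, one_mul]))
      _ = K := by
          rw [hKdef]
          congr 1
          have h1 : (fun x => (V (x - y)) ^ 2) = fun x => ‖V (x - y)‖ ^ (2 : ℝ) := by
            funext x
            rw [Real.norm_eq_abs, show ((2:ℝ)) = ((2:ℕ):ℝ) by norm_num,
              Real.rpow_natCast, sq_abs]
          rw [h1, eLpNorm_norm_rpow _ (by norm_num : (0:ℝ) < 2)]
          have h2 : r * ENNReal.ofReal 2 = 2 * r := by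
            rw [ENNReal.ofReal_ofNat, mul_comm]
          rw [h2]
          have h3 : eLpNorm (fun x => V (x - y)) (2 * r) μ = eLpNorm V (2 * r) μ :=
            eLpNorm_comp_measurePreserving hVae (measurePreserving_sub_right μ y)
          rw [h3, ← ENNReal.rpow_natCast (eLpNorm V (2 * r) μ) 2]
          norm_num
  -- ρ is a probability density
  have hρint : Integrable ρ μ := by
    by_contra h
    rw [integral_undef h] at hρ1
    exact one_ne_zero hρ1.symm
  have hPone : (∫⁻ x, P x ∂μ) = 1 := by
    rw [hPdef, ← ofReal_integral_eq_lintegral_ofReal hρint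
      (Filter.Eventually.of_forall hρnn), hρ1, ENNReal.ofReal_one]
  -- Jensen / Cauchy-Schwarz step
  have hgood : ∀ᵐ x ∂μ, ENNReal.ofReal ((W x) ^ 2) ≤ ∫⁻ z, G (x - z) * P z ∂μ := by
    filter_upwards [hWabs] with x hx
    have hVxm : AEMeasurable (fun z => (‖V (x - z)‖₊ : ℝ≥0∞)) μ := (hVx x).enorm
    set A : ℝ≥0∞ := ∫⁻ z, (‖V (x - z)‖₊ : ℝ≥0∞) * P z ∂μ with hAdef
    set B : ℝ≥0∞ := ∫⁻ z, G (x - z) * P z ∂μ with hBdef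
    have hWA : ENNReal.ofReal |W x| ≤ A := by
      have h1 : |W x| ≤ ∫ z, |V (x - z)| * ρ z ∂μ := by
        rw [hW]
        calc |∫ z, V (x - z) * ρ z ∂μ| ≤ ∫ z, |V (x - z) * ρ z| ∂μ := by
              simpa only [Real.norm_eq_abs] using norm_integral_le_integral_norm
                (μ := μ) (fun z => V (x - z) * ρ z)
          _ = ∫ z, |V (x - z)| * ρ z ∂μ := by
              refine integral_congr_ae (Filter.Eventually.of_forall fun z => ?_)
              simp [abs_mul, abs_of_nonneg (hρnn z)]
      have hint : Integrable (fun z => |V (x - z)| * ρ z) μ := by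
        refine hx.abs.congr (Filter.Eventually.of_forall fun z => ?_)
        simp [abs_mul, abs_of_nonneg (hρnn z)]
      have h2 : ENNReal.ofReal (∫ z, |V (x - z)| * ρ z ∂μ) = A := by
        rw [ofReal_integral_eq_lintegral_ofReal hint
          (Filter.Eventually.of_forall fun z => mul_nonneg (abs_nonneg _) (hρnn z))]
        refine lintegral_congr fun z => ?_
        rw [ENNReal.ofReal_mul (abs_nonneg _), hPdef]
        congr 1
        rw [← Real.enorm_eq_ofReal_abs, enorm_eq_nnnorm]
      exact le_trans (ENNReal.ofReal_le_ofReal h1) h2.le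
    have hCS : A ^ 2 ≤ B := by
      have h22 : Real.HolderConjugate 2 2 := Real.HolderConjugate.two_two
      have hPh : AEMeasurable (fun z => (P z) ^ (2 : ℝ)⁻¹) μ :=
        (hPm.aemeasurable).pow_const _
      have hfm : AEMeasurable (fun z => (‖V (x - z)‖₊ : ℝ≥0∞) * (P z) ^ (2 : ℝ)⁻¹) μ :=
        hVxm.mul hPh
      have key := ENNReal.lintegral_mul_le_Lp_mul_Lq μ h22 hfm hPh
      have hA' : A = ∫⁻ z, ((‖V (x - z)‖₊ : ℝ≥0∞) * (P z) ^ (2 : ℝ)⁻¹) *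
          (P z) ^ (2 : ℝ)⁻¹ ∂μ := by
        refine lintegral_congr fun z => ?_
        rw [mul_assoc, ← ENNReal.rpow_add_of_nonneg _ _ (by norm_num) (by norm_num)]
        norm_num
      have hf2 : ∀ z, ((‖V (x - z)‖₊ : ℝ≥0∞) * (P z) ^ (2 : ℝ)⁻¹) ^ (2 : ℝ)
          = G (x - z) * P z := by
        intro z
        rw [ENNReal.mul_rpow_of_nonneg _ _ (by norm_num : (0:ℝ) ≤ 2),
          ← ENNReal.rpow_mul, ENNReal.rpow_ofNat]
        norm_num [hGdef]
      have hg2 : ∀ z, ((P z) ^ (2 : ℝ)⁻¹) ^ (2 : ℝ) = P z := by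
        intro z
        rw [← ENNReal.rpow_mul]
        norm_num
      have key2 : A ≤ B ^ (1 / (2:ℝ)) := by
        rw [hA']
        refine le_trans key ?_
        have e1 : (∫⁻ z, ((‖V (x - z)‖₊ : ℝ≥0∞) * (P z) ^ (2 : ℝ)⁻¹) ^ (2:ℝ) ∂μ) = B := by
          rw [hBdef]; exact lintegral_congr fun z => hf2 z
        have e2 : (∫⁻ z, ((P z) ^ (2 : ℝ)⁻¹) ^ (2:ℝ) ∂μ) = 1 := by
          rw [← hPone]; exact lintegral_congr fun z => hg2 z
        rw [e1, e2, ENNReal.one_rpow, mul_one]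
      calc A ^ 2 ≤ (B ^ (1 / (2:ℝ))) ^ 2 := pow_le_pow_left' key2 2
        _ = B := by
            rw [← ENNReal.rpow_natCast (B ^ (1 / (2:ℝ))) 2, ← ENNReal.rpow_mul]
            norm_num
    calc ENNReal.ofReal ((W x) ^ 2) = (ENNReal.ofReal |W x|) ^ 2 := by
          rw [← ENNReal.ofReal_pow (abs_nonneg _), sq_abs]
      _ ≤ A ^ 2 := pow_le_pow_left' hWA 2
      _ ≤ B := hCS
  -- Fubini/Tonelli step
  have hswap : (∫⁻ x, P x * (∫⁻ z, G (x - z) * P z ∂μ) ∂μ) ≤ K := by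
    have hGprod : AEMeasurable (fun p : EuclideanSpace ℝ (Fin d) × EuclideanSpace ℝ (Fin d) => G (p.1 - p.2)) (μ.prod μ) := by
      have := hVae.comp_quasiMeasurePreserving (quasiMeasurePreserving_sub μ μ)
      exact (this.enorm).pow_const 2
    have hFm : AEMeasurable (fun p : EuclideanSpace ℝ (Fin d) × EuclideanSpace ℝ (Fin d) => P p.1 * (G (p.1 - p.2) * P p.2)) (μ.prod μ) :=
      ((hPm.comp measurable_fst).aemeasurable).mul
        (hGprod.mul ((hPm.comp measurable_snd).aemeasurable))
    calc (∫⁻ x, P x * (∫⁻ z, G (x - z) * P z ∂μ) ∂μ)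
        = ∫⁻ x, ∫⁻ z, P x * (G (x - z) * P z) ∂μ ∂μ := by
          refine lintegral_congr fun x => ?_
          rw [lintegral_const_mul' _ _ (hPnetop x)]
      _ = ∫⁻ z, ∫⁻ x, P x * (G (x - z) * P z) ∂μ ∂μ := lintegral_lintegral_swap hFm
      _ = ∫⁻ z, P z * (∫⁻ x, G (x - z) * P x ∂μ) ∂μ := by
          refine lintegral_congr fun z => ?_
          rw [← lintegral_const_mul' _ _ (hPnetop z)]
          refine lintegral_congr fun x => ?_
          ring
      _ ≤ ∫⁻ z, P z * K ∂μ := lintegral_mono fun z => mul_le_mul_right (holder z) _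
      _ = K := by
          rw [lintegral_mul_const' _ _ hK, hPone, one_mul]
  -- main bound, for every y
  have main : ∀ y : EuclideanSpace ℝ (Fin d),
      (∫⁻ x, ENNReal.ofReal (ρ x * (V (x - y) - W x) ^ 2) ∂μ) ≤ 4 * K := by
    intro y
    have hsq : ∀ x : EuclideanSpace ℝ (Fin d), ENNReal.ofReal ((V (x - y) - W x) ^ 2)
        ≤ 2 * G (x - y) + 2 * ENNReal.ofReal ((W x) ^ 2) := by
      intro x
      have h1 : (V (x - y) - W x) ^ 2 ≤ 2 * (V (x - y)) ^ 2 + 2 * (W x) ^ 2 := by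
        nlinarith [sq_nonneg (V (x - y) + W x)]
      have h2 : ENNReal.ofReal ((V (x - y)) ^ 2) = G (x - y) := by
        show _ = ‖V (x - y)‖ₑ ^ 2
        rw [← ofReal_norm_eq_enorm, ← ENNReal.ofReal_pow (norm_nonneg _),
          Real.norm_eq_abs, sq_abs]
      calc ENNReal.ofReal ((V (x - y) - W x) ^ 2)
          ≤ ENNReal.ofReal (2 * (V (x - y)) ^ 2 + 2 * (W x) ^ 2) :=
            ENNReal.ofReal_le_ofReal h1
        _ = 2 * ENNReal.ofReal ((V (x - y)) ^ 2) + 2 * ENNReal.ofReal ((W x) ^ 2) := by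
            rw [ENNReal.ofReal_add (by positivity) (by positivity),
              ENNReal.ofReal_mul (by norm_num), ENNReal.ofReal_mul (by norm_num),
              ENNReal.ofReal_ofNat]
        _ = 2 * G (x - y) + 2 * ENNReal.ofReal ((W x) ^ 2) := by rw [h2]
    have hWsq : (∫⁻ x, P x * ENNReal.ofReal ((W x) ^ 2) ∂μ) ≤ K := by
      refine le_trans (lintegral_mono_ae (hgood.mono fun x hx => ?_)) hswap
      exact mul_le_mul_right hx _
    calc (∫⁻ x, ENNReal.ofReal (ρ x * (V (x - y) - W x) ^ 2) ∂μ)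
        ≤ ∫⁻ x, (2 * (G (x - y) * P x) + 2 * (P x * ENNReal.ofReal ((W x) ^ 2))) ∂μ := by
          refine lintegral_mono fun x => ?_
          rw [ENNReal.ofReal_mul (hρnn x)]
          calc P x * ENNReal.ofReal ((V (x - y) - W x) ^ 2)
              ≤ P x * (2 * G (x - y) + 2 * ENNReal.ofReal ((W x) ^ 2)) :=
                mul_le_mul_right (hsq x) _
            _ = 2 * (G (x - y) * P x) + 2 * (P x * ENNReal.ofReal ((W x) ^ 2)) := by
                ring
      _ = 2 * (∫⁻ x, G (x - y) * P x ∂μ) + 2 * (∫⁻ x, P x * ENNReal.ofReal ((W x) ^ 2) ∂μ) := by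
          rw [lintegral_add_left' (f := fun x => 2 * (G (x - y) * P x))
            (aemeasurable_const.mul ((hGy y).mul hPm.aemeasurable)),
            lintegral_const_mul' _ _ ENNReal.ofNat_ne_top,
            lintegral_const_mul' _ _ ENNReal.ofNat_ne_top]
      _ ≤ 2 * K + 2 * K :=
          add_le_add (mul_le_mul_right (holder y) 2) (mul_le_mul_right hWsq 2)
      _ = 4 * K := by ring
  -- identify the right-hand side
  have hRHS : ENNReal.ofReal
      (4 * (eLpNorm V (2 * r) volume).toReal ^ 2 * (eLpNorm ρ s volume).toReal) = 4 * K := by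
    rw [hKdef, ← hμdef, ENNReal.ofReal_mul (by positivity), ENNReal.ofReal_mul (by norm_num),
      ENNReal.ofReal_pow ENNReal.toReal_nonneg, ENNReal.ofReal_toReal hV.2.ne,
      ENNReal.ofReal_toReal hρs.2.ne, ENNReal.ofReal_ofNat, mul_assoc]
  constructor
  · exact Filter.Eventually.of_forall fun y => by rw [hRHS]; exact main y
  · exact essSup_le_of_ae_le _ (Filter.Eventually.of_forall fun y => by
      rw [hRHS]; exact main y)
end

section
/- Near-optimal invariant unitary for the trace norm: let ι be a finite nonempty index type, G a finite group, and U : G → Matrix ι ι ℂ a map with each U g unitary and U (g·h) = U g · U h for all g, h ∈ G. Let A : Matrix ι ι ℂ satisfy U g · A · (U g)ᴴ = A for all g ∈ G. Then for every ε > 0 there exists a unitary matrix V : Matrix ι ι ℂ with U g · V · (U g)ᴴ = V for all g ∈ G and |tr(Vᴴ · A)|² ≥ ‖A‖₁² − ε. -/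
open Matrix
open scoped ComplexOrder

section Aux
open Polynomial
set_option linter.unusedSectionVars false
variable {n : Type*} [Fintype n] [DecidableEq n]

/-- The positive semidefinite square root (formerly `Matrix.PosSemidef.sqrt`). -/
noncomputable def Matrix.PosSemidef.sqrt {M : Matrix n n ℂ} (hM : M.PosSemidef) :
    Matrix n n ℂ :=
  (hM.1.eigenvectorUnitary : Matrix n n ℂ) *
    diagonal ((↑) ∘ (Real.sqrt ·) ∘ hM.1.eigenvalues) *
    (star hM.1.eigenvectorUnitary : Matrix n n ℂ)

lemma Matrix.PosSemidef.posSemidef_sqrt {M : Matrix n n ℂ} (hM : M.PosSemidef) :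
    hM.sqrt.PosSemidef := by
  have hD : (diagonal ((↑) ∘ (Real.sqrt ·) ∘ hM.1.eigenvalues) : Matrix n n ℂ).PosSemidef :=
    posSemidef_diagonal_iff.mpr fun i => Complex.zero_le_real.mpr (Real.sqrt_nonneg _)
  exact hD.mul_mul_conjTranspose_same (hM.1.eigenvectorUnitary : Matrix n n ℂ)

lemma Matrix.PosSemidef.sqrt_mul_self {M : Matrix n n ℂ} (hM : M.PosSemidef) :
    hM.sqrt * hM.sqrt = M := by
  set u : Matrix n n ℂ := (hM.1.eigenvectorUnitary : Matrix n n ℂ) with hu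
  have h2 : star u * u = 1 := mem_unitaryGroup_iff'.mp (hM.1.eigenvectorUnitary).2
  set D : Matrix n n ℂ := diagonal ((↑) ∘ (Real.sqrt ·) ∘ hM.1.eigenvalues) with hD
  have e1 : hM.sqrt * hM.sqrt = u * (D * D) * star u := by
    change u * D * star u * (u * D * star u) = u * (D * D) * star u
    simp only [mul_assoc]
    rw [← mul_assoc (star u) u, h2, one_mul]
  have e2 : D * D = diagonal (fun i => (hM.1.eigenvalues i : ℂ)) := by
    rw [hD, diagonal_mul_diagonal]
    congr 1
    funext i
    simp only [Function.comp]
    rw [← Complex.ofReal_mul, Real.mul_self_sqrt (hM.eigenvalues_nonneg i)]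
  rw [e1, e2]
  have := hM.1.spectral_theorem
  simp only [Unitary.conjStarAlgAut_apply] at this
  exact this.symm


lemma myConjPow (u M : Matrix n n ℂ) (h1 : u * star u = 1) (h2 : star u * u = 1) (k : ℕ) :
    (u * M * star u) ^ k = u * M ^ k * star u := by
  induction k with
  | zero => simp [h1]
  | succ k ih =>
      rw [pow_succ, ih, pow_succ]
      calc u * M ^ k * star u * (u * M * star u)
          = u * M ^ k * (star u * u) * M * star u := by simp only [mul_assoc]
        _ = u * (M ^ k * M) * star u := by rw [h2]; simp only [mul_one, mul_assoc]

lemma myAevalConj (u M : Matrix n n ℂ) (h1 : u * star u = 1) (h2 : star u * u = 1)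
    (p : ℂ[X]) : aeval (u * M * star u) p = u * aeval M p * star u := by
  induction p using Polynomial.induction_on with
  | C a =>
      simp [Algebra.algebraMap_eq_smul_one, Matrix.mul_smul, Matrix.smul_mul, h1]
  | add p q hp hq => simp [hp, hq, Matrix.mul_add, Matrix.add_mul]
  | monomial k a _ =>
      simp only [_root_.map_mul, map_pow, aeval_X, aeval_C]
      rw [myConjPow u M h1 h2, Algebra.algebraMap_eq_smul_one]
      simp [Matrix.smul_mul, Matrix.mul_smul]

lemma myAevalDiagonal (d : n → ℂ) (p : ℂ[X]) :
    aeval (diagonal d) p = diagonal fun i => p.eval (d i) := by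
  induction p using Polynomial.induction_on with
  | C a =>
      simp [Algebra.algebraMap_eq_smul_one, smul_one_eq_diagonal, eval_C]
  | add p q hp hq => simp [hp, hq, diagonal_add]
  | monomial k a _ =>
      simp only [_root_.map_mul, map_pow, aeval_X, aeval_C, eval_mul, eval_pow, eval_X, eval_C,
        Algebra.algebraMap_eq_smul_one]
      rw [smul_one_eq_diagonal, diagonal_pow, diagonal_mul_diagonal]
      simp

lemma myCommuteAeval (B M : Matrix n n ℂ) (h : Commute B M) (p : ℂ[X]) :
    Commute B (aeval M p) := by
  induction p using Polynomial.induction_on with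
  | C a =>
      rw [aeval_C, Algebra.algebraMap_eq_smul_one]
      exact (Commute.one_right B).smul_right a
  | add p q hp hq => rw [map_add]; exact hp.add_right hq
  | monomial k a _ =>
      simp only [_root_.map_mul, map_pow, aeval_X, aeval_C, Algebra.algebraMap_eq_smul_one]
      exact ((Commute.one_right B).smul_right a).mul_right (h.pow_right (k+1))

lemma mySqrtAeval (S : Matrix n n ℂ) (hS : S.PosSemidef) :
    ∃ p : ℂ[X], hS.sqrt = aeval S p := by
  classical
  set u : Matrix n n ℂ := (hS.1.eigenvectorUnitary : Matrix n n ℂ) with hu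
  have h1 : u * star u = 1 := mem_unitaryGroup_iff.mp (hS.1.eigenvectorUnitary).2
  have h2 : star u * u = 1 := mem_unitaryGroup_iff'.mp (hS.1.eigenvectorUnitary).2
  set s : Finset ℂ := Finset.univ.image (fun i => (hS.1.eigenvalues i : ℂ)) with hs
  set p : ℂ[X] := Lagrange.interpolate s id (fun z => (Real.sqrt z.re : ℂ)) with hp
  refine ⟨p, ?_⟩
  have heval : ∀ i, p.eval ((hS.1.eigenvalues i : ℂ)) = (Real.sqrt (hS.1.eigenvalues i) : ℂ) := by
    intro i
    have hmem : (hS.1.eigenvalues i : ℂ) ∈ s := Finset.mem_image_of_mem _ (Finset.mem_univ i)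
    have := Lagrange.eval_interpolate_at_node (v := (id : ℂ → ℂ))
      (r := fun z => (Real.sqrt z.re : ℂ)) (Set.injOn_id _) hmem
    simpa [hp] using this
  have h4 : S = u * diagonal (fun i => (hS.1.eigenvalues i : ℂ)) * star u := by
    have := hS.1.spectral_theorem
    simp only [Unitary.conjStarAlgAut_apply] at this
    exact this
  have h3 : hS.sqrt = u * diagonal ((↑) ∘ Real.sqrt ∘ hS.1.eigenvalues) * star u := rfl
  rw [h3]
  conv_rhs => rw [h4]
  rw [myAevalConj _ _ h1 h2, myAevalDiagonal]
  have : (diagonal ((↑) ∘ Real.sqrt ∘ hS.1.eigenvalues) : Matrix n n ℂ)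
      = diagonal (fun i => p.eval ((hS.1.eigenvalues i : ℂ))) := by
    exact congrArg diagonal (funext fun i => (heval i).symm)
  rw [this]

lemma myDiagNonneg {M : Matrix n n ℂ} (hM : M.PosSemidef) (i : n) : 0 ≤ M i i := by
  have := hM.dotProduct_mulVec_nonneg (Pi.single i 1)
  simpa [dotProduct, Pi.single_apply, mulVec, Finset.sum_ite_eq'] using this

lemma myTraceReNonneg {M : Matrix n n ℂ} (hM : M.PosSemidef) : 0 ≤ M.trace.re := by
  rw [Matrix.trace]
  rw [Complex.re_sum]
  exact Finset.sum_nonneg fun i _ => (Complex.le_def.mp (myDiagNonneg hM i)).1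

lemma myTraceMulReNonneg {M N : Matrix n n ℂ} (hM : M.PosSemidef) (hN : N.PosSemidef) :
    0 ≤ ((M * N).trace).re := by
  have h1 : M = hM.sqrt * hM.sqrt := hM.sqrt_mul_self.symm
  have h2 : (M * N).trace = (hM.sqrt * N * hM.sqrt).trace := by
    conv_lhs => rw [h1]
    exact (Matrix.trace_mul_cycle hM.sqrt N hM.sqrt).symm
  rw [h2]
  have h3 : (hM.sqrt * N * hM.sqrt).PosSemidef := by
    have := hN.conjTranspose_mul_mul_same hM.sqrt
    rwa [hM.posSemidef_sqrt.1] at this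
  exact myTraceReNonneg h3

lemma mySmulPsd {M : Matrix n n ℂ} (hM : M.PosSemidef) {r : ℝ} (hr : 0 ≤ r) :
    ((r : ℂ) • M).PosSemidef := by
  refine .of_dotProduct_mulVec_nonneg ?_ fun x => ?_
  · unfold Matrix.IsHermitian
    rw [conjTranspose_smul, hM.1]
    simp [Complex.conj_ofReal]
  · rw [smul_mulVec, dotProduct_smul]
    exact mul_nonneg (by exact_mod_cast hr) (hM.dotProduct_mulVec_nonneg x)

lemma myKey {S X : Matrix n n ℂ} (hS : S.PosSemidef) (hX : X.PosDef)
    (h : (X * X - S).PosSemidef) : (hS.sqrt.trace).re ≤ X.trace.re := by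
  set P := hS.sqrt with hP
  have hdet : IsUnit X.det := isUnit_iff_isUnit_det X |>.mp hX.isUnit
  have hXi : X⁻¹ * X = 1 := nonsing_inv_mul X hdet
  have hXi' : X * X⁻¹ = 1 := mul_nonsing_inv X hdet
  have hinvPsd : (X⁻¹).PosSemidef := hX.posSemidef.inv
  have hPX : (P - X).IsHermitian := hS.posSemidef_sqrt.1.sub hX.1
  have hsq : ((P - X) * (P - X)).PosSemidef := by
    have := posSemidef_conjTranspose_mul_self (P - X)
    rwa [hPX] at this
  have t1 : 0 ≤ ((X⁻¹ * ((P - X) * (P - X))).trace).re := myTraceMulReNonneg hinvPsd hsq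
  have t2 : 0 ≤ ((X⁻¹ * (X * X - S)).trace).re := myTraceMulReNonneg hinvPsd h
  have e1 : X⁻¹ * ((P - X) * (P - X)) = X⁻¹ * (P * P) - X⁻¹ * P * X - P + X := by
    have h1 : X⁻¹ * (X * P) = P := by rw [← mul_assoc, hXi, one_mul]
    have h2 : X⁻¹ * (X * X) = X := by rw [← mul_assoc, hXi, one_mul]
    have e0 : (P - X) * (P - X) = P * P - P * X - X * P + X * X := by noncomm_ring
    rw [e0, mul_add, mul_sub, mul_sub, h1, h2]
    simp only [mul_assoc]
  have e2 : X⁻¹ * (X * X - S) = X - X⁻¹ * (P * P) := by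
    rw [mul_sub, ← mul_assoc, hXi, one_mul, hP, hS.sqrt_mul_self]
  have tr1 : ((X⁻¹ * P * X).trace) = P.trace := by
    rw [Matrix.trace_mul_cycle, hXi', one_mul]
  rw [e1] at t1
  rw [e2] at t2
  simp only [Matrix.trace_sub, Matrix.trace_add, Complex.sub_re, Complex.add_re, tr1] at t1 t2
  linarith

lemma mySmulOnePosDef {r : ℝ} (hr : 0 < r) : (((r : ℂ)) • (1 : Matrix n n ℂ)).PosDef := by
  rw [smul_one_eq_diagonal, posDef_diagonal_iff]
  intro i
  exact_mod_cast hr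

lemma myPertPsd (H : Matrix n n ℂ) (hH : H.IsHermitian) (δ : ℝ) (hδ : 0 ≤ δ)
    (c : ℝ) (hc : ∑ i, ∑ j, ‖H i j‖ ≤ c) :
    (((δ : ℂ)) • H + (((δ^2 + c*δ : ℝ) : ℂ)) • (1 : Matrix n n ℂ)).PosSemidef := by
  refine .of_dotProduct_mulVec_nonneg ?_ ?_
  · unfold Matrix.IsHermitian
    rw [conjTranspose_add, conjTranspose_smul, conjTranspose_smul, hH, conjTranspose_one]
    simp [Complex.conj_ofReal]
  · intro x
    set s : ℝ := ∑ i, Complex.normSq (x i) with hs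
    have hs0 : 0 ≤ s := Finset.sum_nonneg fun i _ => Complex.normSq_nonneg _
    have hxb : ∀ i, ‖x i‖ ^ 2 ≤ s := by
      intro i
      rw [← Complex.normSq_eq_norm_sq]
      exact Finset.single_le_sum (fun j _ => Complex.normSq_nonneg (x j)) (Finset.mem_univ i)
    set w : ℂ := star x ⬝ᵥ (H *ᵥ x) with hw
    have hwstar : (starRingEnd ℂ) w = w := by
      have : star w = w := by
        rw [hw, ← Matrix.star_dotProduct_star, star_star, Matrix.star_mulVec, hH,
          Matrix.dotProduct_mulVec]
      exact this
    have hwim : w.im = 0 := Complex.conj_eq_iff_im.mp hwstar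
    have hw2 : w = ∑ i, ∑ j, star (x i) * (H i j * x j) := by
      rw [hw]
      simp [dotProduct, mulVec, Finset.mul_sum]
    have hwabs : ‖w‖ ≤ c * s := by
      have hterm : ∀ i j, ‖star (x i) * (H i j * x j)‖ ≤ ‖H i j‖ * s := by
        intro i j
        simp only [norm_mul, Complex.star_def, Complex.norm_conj]
        have h1 := norm_nonneg (x i)
        have h2 := norm_nonneg (x j)
        have h3 := norm_nonneg (H i j)
        have := hxb i; have := hxb j
        nlinarith [sq_nonneg (‖x i‖ - ‖x j‖), mul_le_mul_of_nonneg_left (hxb j) h3, mul_le_mul_of_nonneg_left (hxb i) h3]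
      calc ‖w‖ ≤ ∑ i, ‖∑ j, star (x i) * (H i j * x j)‖ := by
            rw [hw2]; exact norm_sum_le _ _
        _ ≤ ∑ i, ∑ j, ‖star (x i) * (H i j * x j)‖ :=
            Finset.sum_le_sum fun i _ => norm_sum_le _ _
        _ ≤ ∑ i, ∑ j, ‖H i j‖ * s :=
            Finset.sum_le_sum fun i _ => Finset.sum_le_sum fun j _ => hterm i j
        _ = (∑ i, ∑ j, ‖H i j‖) * s := by
            rw [Finset.sum_mul]
            exact Finset.sum_congr rfl fun i _ => (Finset.sum_mul _ _ _).symm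
        _ ≤ c * s := mul_le_mul_of_nonneg_right hc hs0
    have hq : star x ⬝ᵥ ((((δ : ℂ)) • H + (((δ^2 + c*δ : ℝ) : ℂ)) • (1 : Matrix n n ℂ)) *ᵥ x)
        = (δ : ℂ) * w + ((δ^2 + c*δ : ℝ) : ℂ) * (s : ℂ) := by
      rw [add_mulVec, dotProduct_add, smul_mulVec, smul_mulVec, dotProduct_smul,
        dotProduct_smul, one_mulVec]
      have hxx : star x ⬝ᵥ x = (s : ℂ) := by
        rw [hs, dotProduct]
        push_cast
        exact Finset.sum_congr rfl fun i _ => by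
          rw [Pi.star_apply, Complex.star_def, mul_comm, Complex.mul_conj]
      rw [hxx, hw]
      simp [smul_eq_mul]
    rw [hq, Complex.le_def]
    constructor
    · simp only [Complex.add_re, Complex.mul_re, Complex.ofReal_re, Complex.ofReal_im,
        Complex.zero_re, hwim]
      have hre : -(c * s) ≤ w.re := by
        have h1 : |w.re| ≤ ‖w‖ := Complex.abs_re_le_norm w
        have h2 := abs_le.mp h1
        linarith
      nlinarith
    · simp [Complex.add_im, Complex.mul_im, hwim, Complex.ofReal_im, Complex.ofReal_re, ← Complex.ofReal_pow]

lemma myBadFinite (A : Matrix n n ℂ) : {δ : ℝ | (A + (δ : ℂ) • 1).det = 0}.Finite := by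
  classical
  set q : ℂ[X] := (-A).charpoly with hq
  have hq0 : q ≠ 0 := (Matrix.charpoly_monic _).ne_zero
  have hroots : {z : ℂ | q.IsRoot z}.Finite := Polynomial.finite_setOf_isRoot hq0
  have hsub : {δ : ℝ | (A + (δ : ℂ) • 1).det = 0} ⊆
      (fun δ : ℝ => (δ : ℂ)) ⁻¹' {z : ℂ | q.IsRoot z} := by
    intro δ hδ
    simp only [Set.mem_setOf_eq] at hδ
    have : q.eval (δ : ℂ) = (A + (δ : ℂ) • 1).det := by
      rw [hq, Matrix.charpoly, eval_det, matPolyEquiv_charmatrix]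
      rw [eval_sub, eval_X, eval_C]
      rw [scalar_apply, ← smul_one_eq_diagonal]
      rw [sub_neg_eq_add, add_comm]
    simp only [Set.mem_preimage, Set.mem_setOf_eq, Polynomial.IsRoot, this, hδ]
  exact (hroots.preimage (fun a b _ _ h => by exact_mod_cast h)).subset hsub

lemma myTraceAbsLe (V : Matrix n n ℂ) (h : Vᴴ * V = 1) :
    ‖V.trace‖ ≤ Fintype.card n := by
  have hdiag : ∀ i, ‖V i i‖ ≤ 1 := by
    intro i
    have h1 : (Vᴴ * V) i i = 1 := by rw [h, Matrix.one_apply_eq]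
    rw [Matrix.mul_apply] at h1
    have h2 : ∀ j, Vᴴ i j * V j i = (Complex.normSq (V j i) : ℂ) := by
      intro j
      rw [Matrix.conjTranspose_apply, Complex.star_def, mul_comm, Complex.mul_conj]
    rw [Finset.sum_congr rfl (fun j _ => h2 j)] at h1
    have h3 : (∑ j, Complex.normSq (V j i)) = 1 := by
      have : ((∑ j, Complex.normSq (V j i) : ℝ) : ℂ) = 1 := by push_cast; exact h1
      exact_mod_cast this
    have h4 : Complex.normSq (V i i) ≤ 1 := by
      rw [← h3]
      exact Finset.single_le_sum (f := fun j => Complex.normSq (V j i))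
        (fun j _ => Complex.normSq_nonneg _) (Finset.mem_univ i)
    rw [Complex.norm_def]
    exact Real.sqrt_le_one.mpr h4
  calc ‖V.trace‖ ≤ ∑ i, ‖V i i‖ := norm_sum_le _ _
    _ ≤ ∑ _i : n, (1:ℝ) := Finset.sum_le_sum fun i _ => hdiag i
    _ = Fintype.card n := by simp

end Aux
set_option maxHeartbeats 1000000

/-- **Near-optimal invariant unitary for the trace norm**: if `A` is invariant under a
finite unitary representation `U`, then for every `ε > 0` there is an invariant unitary
`V` with `|tr(Vᴴ·A)|² ≥ ‖A‖₁² − ε`. -/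
theorem near_optimal_invariant_unitary {ι : Type*} [Fintype ι] [DecidableEq ι]
    [Nonempty ι] (G : Type*) [Group G] [Fintype G]
    (U : G → Matrix ι ι ℂ) (hUu : ∀ g, (U g)ᴴ * U g = 1)
    (hUm : ∀ g h : G, U (g * h) = U g * U h)
    (A : Matrix ι ι ℂ) (hA : ∀ g, U g * A * (U g)ᴴ = A) :
    ∀ ε > (0 : ℝ), ∃ V : Matrix ι ι ℂ, Vᴴ * V = 1 ∧ (∀ g, U g * V * (U g)ᴴ = V) ∧
      (‖(Vᴴ * A).trace‖) ^ 2 ≥ traceNorm A ^ 2 - ε := by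
  intro ε hε
  classical
  have hS : (Aᴴ * A).PosSemidef := posSemidef_conjTranspose_mul_self A
  have htrA : traceNorm A = ((hS.sqrt).trace).re := by
    unfold traceNorm msqrt
    rw [dif_pos hS]
    rfl
  set a : ℝ := traceNorm A with ha_def
  have ha0 : 0 ≤ a := by rw [htrA]; exact myTraceReNonneg hS.posSemidef_sqrt
  have hN0 : (0:ℝ) < (Fintype.card ι : ℝ) := by exact_mod_cast Fintype.card_pos
  set N : ℝ := (Fintype.card ι : ℝ) with hN_def
  set H : Matrix ι ι ℂ := A + Aᴴ with hH_def
  have hHherm : H.IsHermitian := by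
    unfold Matrix.IsHermitian
    rw [hH_def, conjTranspose_add, conjTranspose_conjTranspose]
    exact add_comm _ _
  set c : ℝ := ∑ i, ∑ j, ‖H i j‖ with hc_def
  have hc0 : 0 ≤ c := Finset.sum_nonneg fun i _ => Finset.sum_nonneg fun j _ =>
    norm_nonneg _
  set η : ℝ := min 1 (ε / (2*a+1)) with hη_def
  have hη0 : 0 < η := lt_min one_pos (div_pos hε (by linarith))
  have hη1 : η ≤ 1 := min_le_left _ _
  have hηε : (2*a+1) * η ≤ ε := by
    have h1 : η ≤ ε / (2*a+1) := min_le_right _ _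
    have h2 : η * (2*a+1) ≤ ε := (le_div_iff₀ (by linarith)).mp h1
    linarith
  set β : ℝ := η / (2*N) with hβ_def
  have hβ0 : 0 < β := div_pos hη0 (by linarith)
  set δ₁ : ℝ := min (β^2 / (c+1)) (min β 1) with hδ₁_def
  have hδ₁0 : 0 < δ₁ :=
    lt_min (div_pos (pow_pos hβ0 2) (by linarith)) (lt_min hβ0 one_pos)
  obtain ⟨δ, hδmem⟩ := ((Set.Ioo_infinite hδ₁0).diff (myBadFinite A)).nonempty
  obtain ⟨hδIoo, hδgood⟩ := hδmem
  obtain ⟨hδ0, hδlt⟩ := hδIoo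
  have hδdet : (A + (δ : ℂ) • 1).det ≠ 0 := fun h => hδgood h
  set Aδ : Matrix ι ι ℂ := A + (δ:ℂ) • 1 with hAδ_def
  have hAδH : Aδᴴ = Aᴴ + (δ:ℂ) • 1 := by
    rw [hAδ_def, conjTranspose_add, conjTranspose_smul, conjTranspose_one]
    congr 1
    rw [Complex.star_def, Complex.conj_ofReal]
  have hT : (Aδᴴ * Aδ).PosSemidef := posSemidef_conjTranspose_mul_self Aδ
  set P : Matrix ι ι ℂ := hT.sqrt with hP_def
  have hPherm : P.IsHermitian := hT.posSemidef_sqrt.1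
  have hPP : P * P = Aδᴴ * Aδ := hT.sqrt_mul_self
  have hdetP : IsUnit P.det := by
    rw [isUnit_iff_ne_zero]
    intro h0
    have h1 : P.det * P.det = Aδᴴ.det * Aδ.det := by rw [← det_mul, ← det_mul, hPP]
    have h3 : Aδᴴ.det ≠ 0 := by
      rw [det_conjTranspose]
      exact fun hcon => hδdet (by simpa using congrArg star hcon)
    rw [h0, mul_zero] at h1
    exact h3 (by rcases mul_eq_zero.mp h1.symm with h | h; exact h; exact absurd h hδdet)
  have hPinv : P⁻¹ * P = 1 := nonsing_inv_mul P hdetP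
  have hPinv' : P * P⁻¹ = 1 := mul_nonsing_inv P hdetP
  have hPinvherm : (P⁻¹)ᴴ = P⁻¹ := by rw [conjTranspose_nonsing_inv, hPherm]
  set V : Matrix ι ι ℂ := Aδ * P⁻¹ with hV_def
  have hVH : Vᴴ = P⁻¹ * Aδᴴ := by rw [hV_def, conjTranspose_mul, hPinvherm]
  have hunit : Vᴴ * V = 1 := by
    rw [hVH, hV_def]
    calc P⁻¹ * Aδᴴ * (Aδ * P⁻¹) = P⁻¹ * ((Aδᴴ * Aδ) * P⁻¹) := by simp only [mul_assoc]
      _ = P⁻¹ * (P * (P * P⁻¹)) := by rw [← hPP, mul_assoc]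
      _ = P⁻¹ * P := by rw [hPinv', mul_one]
      _ = 1 := hPinv
  -- invariance
  have hUU : ∀ g, U g * (U g)ᴴ = 1 := fun g => mul_eq_one_comm.mp (hUu g)
  have hcommA : ∀ g, U g * A = A * U g := by
    intro g
    calc U g * A = U g * A * ((U g)ᴴ * U g) := by rw [hUu g, mul_one]
      _ = (U g * A * (U g)ᴴ) * U g := by simp only [mul_assoc]
      _ = A * U g := by rw [hA g]
  have hcommAH : ∀ g, U g * Aᴴ = Aᴴ * U g := by
    intro g
    have h1 : U g * (Aᴴ * (U g)ᴴ) = Aᴴ := by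
      have := congrArg conjTranspose (hA g)
      rwa [conjTranspose_mul, conjTranspose_mul, conjTranspose_conjTranspose] at this
    calc U g * Aᴴ = U g * Aᴴ * ((U g)ᴴ * U g) := by rw [hUu g, mul_one]
      _ = (U g * (Aᴴ * (U g)ᴴ)) * U g := by simp only [mul_assoc]
      _ = Aᴴ * U g := by rw [h1]
  have hcommAδ : ∀ g, U g * Aδ = Aδ * U g := by
    intro g
    rw [hAδ_def, mul_add, add_mul, hcommA g, mul_smul_comm, smul_mul_assoc, mul_one, one_mul]
  have hcommAδH : ∀ g, U g * Aδᴴ = Aδᴴ * U g := by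
    intro g
    rw [hAδH, mul_add, add_mul, hcommAH g, mul_smul_comm, smul_mul_assoc, mul_one, one_mul]
  have hcommT : ∀ g, Commute (U g) (Aδᴴ * Aδ) := fun g =>
    (show Commute (U g) Aδᴴ from hcommAδH g).mul_right
      (show Commute (U g) Aδ from hcommAδ g)
  have hcommP : ∀ g, U g * P = P * U g := by
    intro g
    obtain ⟨p, hp⟩ := mySqrtAeval _ hT
    rw [hP_def, hp]
    exact myCommuteAeval _ _ (hcommT g) p
  have hcommPinv : ∀ g, U g * P⁻¹ = P⁻¹ * U g := by
    intro g
    calc U g * P⁻¹ = P⁻¹ * P * (U g * P⁻¹) := by rw [hPinv, one_mul]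
      _ = P⁻¹ * ((P * U g) * P⁻¹) := by simp only [mul_assoc]
      _ = P⁻¹ * ((U g * P) * P⁻¹) := by rw [hcommP g]
      _ = P⁻¹ * (U g * (P * P⁻¹)) := by simp only [mul_assoc]
      _ = P⁻¹ * U g := by rw [hPinv', mul_one]
  have hinvV : ∀ g, U g * V * (U g)ᴴ = V := by
    intro g
    have hcomm : U g * V = V * U g := by
      rw [hV_def]
      calc U g * (Aδ * P⁻¹) = (U g * Aδ) * P⁻¹ := by rw [mul_assoc]
        _ = Aδ * (U g * P⁻¹) := by rw [hcommAδ g, mul_assoc]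
        _ = Aδ * P⁻¹ * U g := by rw [hcommPinv g, mul_assoc]
    rw [hcomm, mul_assoc, hUU g, mul_one]
  -- trace identity
  have hVA : Vᴴ * A = P - (δ:ℂ) • Vᴴ := by
    have hA' : A = Aδ - (δ:ℂ) • 1 := by rw [hAδ_def, add_sub_cancel_right]
    rw [hVH]
    conv_lhs => rw [hA']
    rw [mul_sub]
    congr 1
    · rw [mul_assoc, ← hPP, ← mul_assoc, hPinv, one_mul]
    · rw [mul_smul_comm, mul_one]
  set t : ℂ := (Vᴴ * A).trace with ht_def
  have htval : t = P.trace - (δ:ℂ) * Vᴴ.trace := by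
    rw [ht_def, hVA, trace_sub, trace_smul, smul_eq_mul]
  have htrVH : ‖Vᴴ.trace‖ ≤ N := by
    rw [trace_conjTranspose]
    rw [show star V.trace = (starRingEnd ℂ) V.trace from rfl, Complex.norm_conj]
    exact myTraceAbsLe V hunit
  have hPtr0 : 0 ≤ P.trace.re := myTraceReNonneg hT.posSemidef_sqrt
  set ρ : ℝ := Real.sqrt ((c+1)*δ) with hρ_def
  have hρ0 : 0 < ρ := Real.sqrt_pos.mpr (mul_pos (by linarith) hδ0)
  have hρsq : ρ^2 = (c+1)*δ := Real.sq_sqrt (by positivity)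
  -- key inequality : a ≤ P.trace.re + ρ * N
  have hkey : a ≤ P.trace.re + ρ * N := by
    have hX : (P + (ρ:ℂ) • 1).PosDef :=
      Matrix.PosDef.posSemidef_add hT.posSemidef_sqrt (mySmulOnePosDef hρ0)
    have hTexp : Aδᴴ * Aδ = Aᴴ*A + (δ:ℂ) • H + ((δ^2 : ℝ):ℂ) • 1 := by
      rw [hAδH, hAδ_def, hH_def]
      simp only [Matrix.mul_add, Matrix.add_mul, Matrix.mul_smul, Matrix.smul_mul,
        mul_one, one_mul, smul_smul, smul_add]
      push_cast
      module
    have hXX : (P + (ρ:ℂ)•1) * (P + (ρ:ℂ)•1) - Aᴴ*A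
        = ((δ:ℂ) • H + (((δ^2 + c*δ : ℝ)):ℂ) • 1) + ((δ:ℝ):ℂ) • (1 : Matrix ι ι ℂ)
          + (((2*ρ : ℝ)):ℂ) • P := by
      have expand : (P + (ρ:ℂ)•1) * (P + (ρ:ℂ)•1)
          = P * P + ((2*ρ:ℝ):ℂ) • P + (((ρ^2:ℝ)):ℂ) • 1 := by
        simp only [Matrix.mul_add, Matrix.add_mul, Matrix.mul_smul, Matrix.smul_mul,
          mul_one, one_mul, smul_smul]
        push_cast
        module
      rw [expand, hPP, hTexp, hρsq]
      push_cast
      module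
    have hpsd : ((P + (ρ:ℂ)•1) * (P + (ρ:ℂ)•1) - Aᴴ*A).PosSemidef := by
      rw [hXX]
      exact ((myPertPsd H hHherm δ hδ0.le c le_rfl).add
        (mySmulPsd Matrix.PosSemidef.one hδ0.le)).add
        (mySmulPsd hT.posSemidef_sqrt (by positivity))
    have hk := myKey hS hX hpsd
    have htrX : ((P + (ρ:ℂ)•1).trace).re = P.trace.re + ρ * N := by
      rw [trace_add, trace_smul, trace_one, Complex.add_re, smul_eq_mul]
      norm_num [hN_def]
    rw [htrA]
    rw [htrX] at hk
    exact hk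
  -- lower bound on |t|
  have habs : P.trace.re - δ * N ≤ ‖t‖ := by
    rw [htval]
    have h2 : ‖(δ:ℂ) * Vᴴ.trace‖ = δ * ‖Vᴴ.trace‖ := by
      rw [norm_mul, Complex.norm_real, Real.norm_eq_abs, abs_of_pos hδ0]
    have h3 : ‖P.trace‖ - ‖(δ:ℂ) * Vᴴ.trace‖
        ≤ ‖P.trace - (δ:ℂ) * Vᴴ.trace‖ := by
      exact norm_sub_norm_le P.trace ((δ:ℂ) * Vᴴ.trace)
    have h4 := Complex.re_le_norm P.trace
    have h5 := mul_le_mul_of_nonneg_left htrVH hδ0.le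
    rw [h2] at h3
    linarith
  -- δ, ρ bounds
  have hρle : ρ ≤ β := by
    rw [hρ_def, show β = Real.sqrt (β^2) from (Real.sqrt_sq hβ0.le).symm]
    apply Real.sqrt_le_sqrt
    have h1 : δ ≤ β^2/(c+1) := le_trans hδlt.le (min_le_left _ _)
    have h2 : δ * (c+1) ≤ β^2 := (le_div_iff₀ (by linarith)).mp h1
    linarith
  have hδle : δ ≤ β := le_trans hδlt.le (le_trans (min_le_right _ _) (min_le_left _ _))
  have hbound : N * ρ + N * δ ≤ η := by
    have h1 : N * ρ ≤ N * β := mul_le_mul_of_nonneg_left hρle (by linarith)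
    have h2 : N * δ ≤ N * β := mul_le_mul_of_nonneg_left hδle (by linarith)
    have h3 : N * β = η / 2 := by
      rw [hβ_def, ← mul_div_assoc,
        div_eq_div_iff (by positivity : (0:ℝ) < 2*N).ne' (by norm_num : (2:ℝ) ≠ 0)]
      ring
    linarith
  have hfinal : a - η ≤ ‖t‖ := by nlinarith
  refine ⟨V, hunit, hinvV, ?_⟩
  have habs0 : 0 ≤ ‖t‖ := norm_nonneg t
  rw [ge_iff_le]
  show a ^ 2 - ε ≤ ‖t‖ ^ 2
  rcases le_or_gt a η with hcase | hcase
  · nlinarith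
  · have h3 : 0 ≤ a - η := by linarith
    nlinarith
end
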